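/- arXiv:2308.00601 — 9 statements merged into one kernel-verified Lean document; each statement's English description precedes it below -/
import Mathlib

section
/- Let f be a positive-definite quadratic form on a symplectic vector space (V, ω) with associated linear map F (so that the polarization A of f satisfies A(v,w) = ω(v, Fw)). Then every eigenvalue of the complexification of F is nonzero and purely imaginary. -/
open TensorProduct

lemma decomp_aux {V : Type*} [AddCommGroup V] [Module ℝ V] (x : ℂ ⊗[ℝ] V) :
    ∃ u w : V, x = (1 : ℂ) ⊗ₜ[ℝ] u + Complex.I • ((1 : ℂ) ⊗ₜ[ℝ] w) := by
  induction x using TensorProduct.induction_on with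
  | zero => exact ⟨0, 0, by simp⟩
  | tmul z v =>
    refine ⟨z.re • v, z.im • v, ?_⟩
    have h1 : (1 : ℂ) ⊗ₜ[ℝ] (z.re • v) = (z.re : ℂ) ⊗ₜ[ℝ] v := by
      rw [tmul_smul, smul_tmul', Complex.real_smul, mul_one]
    have h2 : Complex.I • ((1 : ℂ) ⊗ₜ[ℝ] (z.im • v))
        = ((z.im : ℂ) * Complex.I) ⊗ₜ[ℝ] v := by
      rw [tmul_smul, smul_comm, smul_tmul', smul_eq_mul, mul_one, smul_tmul',
        Complex.real_smul]
    rw [h1, h2, ← add_tmul, Complex.re_add_im]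
  | add a b ha hb =>
    obtain ⟨u1, w1, h1⟩ := ha
    obtain ⟨u2, w2, h2⟩ := hb
    exact ⟨u1 + u2, w1 + w2, by rw [h1, h2, tmul_add, tmul_add, smul_add]; abel⟩

/-- If f is a positive-definite quadratic form on a symplectic
vector space (V, ω), with polarization A and associated map F (A(v,w) = ω(v,Fw)),
then every eigenvalue of the complexification of F is nonzero and purely
imaginary. -/
theorem stmt2 {V : Type*} [AddCommGroup V] [Module ℝ V] [FiniteDimensional ℝ V]
    (ω : LinearMap.BilinForm ℝ V)
    (hω_anti : ∀ v w : V, ω v w = - ω w v)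
    (hω_nondeg : ∀ v : V, (∀ w : V, ω v w = 0) → v = 0)
    (f : QuadraticForm ℝ V) (hf : f.PosDef)
    (A : LinearMap.BilinForm ℝ V)
    (hA_symm : ∀ v w : V, A v w = A w v)
    (hAf : ∀ v : V, A v v = f v)
    (F : V →ₗ[ℝ] V)
    (hF : ∀ v w : V, A v w = ω v (F w)) :
    ∀ mu : ℂ, Module.End.HasEigenvalue (LinearMap.baseChange ℂ F) mu →
      mu ≠ 0 ∧ mu.re = 0 := by
  intro mu hmu
  obtain ⟨x, hx⟩ := hmu.exists_hasEigenvector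
  set Aℂ := A.baseChange ℂ with hAc
  set ωℂ := ω.baseChange ℂ with hωc
  have key : ∀ p q : ℂ ⊗[ℝ] V, Aℂ p q = ωℂ p (LinearMap.baseChange ℂ F q) := by
    intro p q
    induction p using TensorProduct.induction_on with
    | zero => simp
    | tmul a v =>
      induction q using TensorProduct.induction_on with
      | zero => simp
      | tmul b w => simp [hAc, hωc, hF v w]
      | add s t hs ht => simp [map_add, hs, ht]
    | add s t hs ht => simp [map_add, hs, ht]
  obtain ⟨u, w, hdec⟩ := decomp_aux x
  have hx0 : x ≠ 0 := hx.2
  have huw : u ≠ 0 ∨ w ≠ 0 := by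
    by_contra h
    push_neg at h
    exact hx0 (by simp [hdec, h.1, h.2])
  set y : ℂ ⊗[ℝ] V := (1 : ℂ) ⊗ₜ[ℝ] u - Complex.I • ((1 : ℂ) ⊗ₜ[ℝ] w) with hy
  set r : ℝ := A u u + A w w with hr
  set s : ℝ := ω u w with hs
  have hωww : ω w w = 0 := by have := hω_anti w w; linarith
  have hωuu : ω u u = 0 := by have := hω_anti u u; linarith
  have hAval : Aℂ y x = (r : ℂ) := by
    simp only [hy, hdec, map_add, map_sub, map_smul, LinearMap.sub_apply, LinearMap.smul_apply,
      smul_eq_mul]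
    simp [hAc, LinearMap.BilinForm.baseChange_tmul, Complex.real_smul, hA_symm w u, hr]
    linear_combination (-((A w) w : ℂ)) * Complex.I_sq
  have hωval : ωℂ y x = 2 * s * Complex.I := by
    simp only [hy, hdec, map_add, map_sub, map_smul, LinearMap.sub_apply, LinearMap.smul_apply,
      smul_eq_mul]
    simp [hωc, LinearMap.BilinForm.baseChange_tmul, Complex.real_smul, hωww, hωuu,
      hω_anti w u, hs]
    ring
  have heig : LinearMap.baseChange ℂ F x = mu • x := hx.apply_eq_smul
  have heq : (r : ℂ) = mu * (2 * s * Complex.I) := by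
    have := key y x
    rw [heig, map_smul, smul_eq_mul, hAval, hωval] at this
    exact this
  have hrpos : 0 < r := by
    rcases huw with hu | hw
    · have h1 : 0 < f u := hf u hu
      have h2 : 0 ≤ f w := hf.nonneg w
      rw [hr, hAf, hAf]; linarith
    · have h1 : 0 < f w := hf w hw
      have h2 : 0 ≤ f u := hf.nonneg u
      rw [hr, hAf, hAf]; linarith
  have hμR := congrArg Complex.re heq
  have hμI := congrArg Complex.im heq
  simp [Complex.mul_re, Complex.mul_im] at hμR hμI
  have hs0 : s ≠ 0 := by
    intro h
    rw [h] at hμR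
    simp at hμR
    linarith
  have hre : mu.re = 0 := by
    rcases hμI with h | h
    · exact h
    · exact absurd h hs0
  refine ⟨?_, hre⟩
  intro h
  rw [h] at heq
  simp at heq
  linarith
end

section
/- Let f be a positive-definite quadratic form on (V, ω) with associated map F, and let v = x + iy ∈ V^ℂ (x, y ∈ V) be an eigenvector of F with eigenvalue iμ where μ > 0. Then Fx = -μy, Fy = μx, and ω(x, y) < 0. -/
open TensorProduct

noncomputable def prRe {V : Type*} [AddCommGroup V] [Module ℝ V] :
    ℂ ⊗[ℝ] V →ₗ[ℝ] V :=
  TensorProduct.lift ((LinearMap.lsmul ℝ V) ∘ₗ Complex.reLm)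

noncomputable def prIm {V : Type*} [AddCommGroup V] [Module ℝ V] :
    ℂ ⊗[ℝ] V →ₗ[ℝ] V :=
  TensorProduct.lift ((LinearMap.lsmul ℝ V) ∘ₗ Complex.imLm)

@[simp] lemma prRe_tmul {V : Type*} [AddCommGroup V] [Module ℝ V] (c : ℂ) (v : V) :
    prRe (c ⊗ₜ[ℝ] v) = c.re • v := rfl

@[simp] lemma prIm_tmul {V : Type*} [AddCommGroup V] [Module ℝ V] (c : ℂ) (v : V) :
    prIm (c ⊗ₜ[ℝ] v) = c.im • v := rfl

/-- If v = x + iy ∈ V^ℂ is an eigenvector of F (associated to a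
positive-definite quadratic form f via ω) with eigenvalue iμ, μ > 0, then
Fx = -μy, Fy = μx and ω(x,y) < 0. -/
theorem stmt3 {V : Type*} [AddCommGroup V] [Module ℝ V] [FiniteDimensional ℝ V]
    (ω : LinearMap.BilinForm ℝ V)
    (hω_anti : ∀ v w : V, ω v w = - ω w v)
    (hω_nondeg : ∀ v : V, (∀ w : V, ω v w = 0) → v = 0)
    (f : QuadraticForm ℝ V) (hf : f.PosDef)
    (A : LinearMap.BilinForm ℝ V)
    (hA_symm : ∀ v w : V, A v w = A w v)
    (hAf : ∀ v : V, A v v = f v)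
    (F : V →ₗ[ℝ] V)
    (hF : ∀ v w : V, A v w = ω v (F w))
    (mu : ℝ) (hmu : 0 < mu) (x y : V)
    (hv_ne : (1 : ℂ) ⊗ₜ[ℝ] x + Complex.I ⊗ₜ[ℝ] y ≠ 0)
    (hv : (LinearMap.baseChange ℂ F) ((1 : ℂ) ⊗ₜ[ℝ] x + Complex.I ⊗ₜ[ℝ] y)
        = ((mu : ℂ) * Complex.I) • ((1 : ℂ) ⊗ₜ[ℝ] x + Complex.I ⊗ₜ[ℝ] y)) :
    F x = -mu • y ∧ F y = mu • x ∧ ω x y < 0 := by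
  have h1 := congrArg prRe hv
  have h2 := congrArg prIm hv
  simp [smul_tmul'] at h1 h2
  have hfx : F x = -mu • y := by rw [h1, neg_smul]
  have hfy : F y = mu • x := h2
  refine ⟨hfx, hfy, ?_⟩
  -- f x = -mu * ω x y
  have e1 : f x = -mu * ω x y := by
    rw [← hAf, hF, hfx]
    simp [neg_smul]
  have e2 : f y = -mu * ω x y := by
    rw [← hAf, hF, hfy]
    rw [map_smul]
    have := hω_anti y x
    simp only [LinearMap.smul_apply, smul_eq_mul]
    rw [this]
    ring
  -- not both zero
  have hne : x ≠ 0 ∨ y ≠ 0 := by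
    by_contra h
    push_neg at h
    apply hv_ne
    simp [h.1, h.2]
  have hpos : 0 < f x + f y := by
    rcases hne with h | h
    · have := hf x h
      have h2' : 0 ≤ f y := by rw [e2, ← e1]; exact le_of_lt this
      linarith
    · have := hf y h
      have h1' : 0 ≤ f x := by rw [e1, ← e2]; exact le_of_lt this
      linarith
  nlinarith [e1, e2]
end

section
/- (Williamson's theorem) Let f be a positive-definite quadratic form on a 2n-dimensional real symplectic vector space (V, ω). Then there exists a symplectic basis {x_1,…,x_n, y_1,…,y_n} of V and positive reals μ_1,…,μ_n such that for every v = Σ_j (s_j x_j + t_j y_j) one has f(v) = Σ_j μ_j (s_j² + t_j²). -/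
/-!
Make `f` the squared norm of an inner product. Then `ω v w = ⟪J v, w⟫` for an injective
skew-adjoint operator `J`, so `-J²` is symmetric and positive. If `e` is an eigenvector of `-J²`,
the plane spanned by `e` and `J e` is `J`-invariant and `J` acts on it as a multiple of a rotation;
rescaling gives an orthogonal pair `x, y` there with `ω x y = 1` and `f x = f y`. The orthogonal
complement of this plane is also `ω`-orthogonal to it, so `ω` stays nondegenerate on it, and
induction on the dimension finishes the proof.
-/

open Module RealInnerProductSpace

theorem linearIndependent_sumElim_of_symplectic {R M ι : Type*} [CommRing R] [AddCommGroup M]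
    [Module R M] [Fintype ι] [DecidableEq ι] (ω : LinearMap.BilinForm R M) {x y : ι → M}
    (hxy : ∀ i j, ω (x i) (y j) = if i = j then 1 else 0)
    (hxx : ∀ i j, ω (x i) (x j) = 0) (hyy : ∀ i j, ω (y i) (y j) = 0) :
    LinearIndependent R (Sum.elim x y) := by
  rw [Fintype.linearIndependent_iff]
  rintro g hg (j | j)
  · simpa [Fintype.sum_sum_type, hxy, hyy] using congrArg (fun v => ω v (y j)) hg
  · simpa [Fintype.sum_sum_type, hxy, hxx] using congrArg (ω (x j)) hg

section InnerProductSpace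

variable {E : Type*} [NormedAddCommGroup E] [InnerProductSpace ℝ E]

def IsWilliamsonFamily {ι : Type*} [DecidableEq ι] (ω : LinearMap.BilinForm ℝ E)
    (x y : ι → E) (μ : ι → ℝ) : Prop :=
  ∀ i j, ω (x i) (y j) = (if i = j then 1 else 0) ∧ ω (x i) (x j) = 0 ∧ ω (y i) (y j) = 0 ∧
    ⟪x i, x j⟫ = (if i = j then μ i else 0) ∧ ⟪y i, y j⟫ = (if i = j then μ i else 0) ∧
    ⟪x i, y j⟫ = 0

namespace IsWilliamsonFamily

variable {ι : Type*} [DecidableEq ι] {ω : LinearMap.BilinForm ℝ E} {x y : ι → E} {μ : ι → ℝ}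

theorem linearIndependent [Fintype ι] (h : IsWilliamsonFamily ω x y μ) :
    LinearIndependent ℝ (Sum.elim x y) :=
  linearIndependent_sumElim_of_symplectic ω (fun i j => (h i j).1) (fun i j => (h i j).2.1)
    (fun i j => (h i j).2.2.1)

theorem inner_sum_self [Fintype ι] (h : IsWilliamsonFamily ω x y μ) (s t : ι → ℝ) :
    ⟪∑ j, (s j • x j + t j • y j), ∑ j, (s j • x j + t j • y j)⟫
      = ∑ j, μ j * (s j ^ 2 + t j ^ 2) := by
  have hterm : ∀ i j, ⟪s i • x i + t i • y i, s j • x j + t j • y j⟫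
      = if i = j then μ i * (s i ^ 2 + t i ^ 2) else 0 := fun i j => by
    obtain ⟨-, -, -, hxx, hyy, hxy⟩ := h i j
    have hyx : ⟪y i, x j⟫ = 0 := by rw [real_inner_comm]; exact (h j i).2.2.2.2.2
    simp only [inner_add_left, inner_add_right, real_inner_smul_left, real_inner_smul_right,
      hxx, hyy, hxy, hyx]
    split_ifs with hij
    · subst hij; ring
    · ring
  simp only [sum_inner, inner_sum, hterm, Finset.sum_ite_eq', Finset.mem_univ, if_true]

theorem cons {k : ℕ} (hanti : ∀ v w, ω v w = -ω w v) {W : Submodule ℝ E}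
    {x y : Fin k → W} {μ : Fin k → ℝ} (h : IsWilliamsonFamily (ω.restrict W) x y μ)
    {x₀ y₀ : E} {μ₀ : ℝ} (hxy₀ : ω x₀ y₀ = 1) (hx₀ : ⟪x₀, x₀⟫ = μ₀) (hy₀ : ⟪y₀, y₀⟫ = μ₀)
    (hx₀y₀ : ⟪x₀, y₀⟫ = 0)
    (hW : ∀ w ∈ W, ω x₀ w = 0 ∧ ω y₀ w = 0 ∧ ⟪x₀, w⟫ = 0 ∧ ⟪y₀, w⟫ = 0) :
    IsWilliamsonFamily ω (Fin.cons x₀ fun i => (x i : E)) (Fin.cons y₀ fun i => (y i : E))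
      (Fin.cons μ₀ μ) := by
  have hself : ∀ v, ω v v = 0 := fun v => by linarith [hanti v v]
  have hW' : ∀ w ∈ W, ω w x₀ = 0 ∧ ω w y₀ = 0 ∧ ⟪w, x₀⟫ = 0 ∧ ⟪w, y₀⟫ = 0 := fun w hw => by
    obtain ⟨h1, h2, h3, h4⟩ := hW w hw
    rw [hanti, h1, hanti w, h2, real_inner_comm, h3, real_inner_comm, h4]
    simp
  intro i j
  cases i using Fin.cases <;> cases j using Fin.cases
  · simp only [Fin.cons_zero, if_true]
    exact ⟨hxy₀, hself x₀, hself y₀, hx₀, hy₀, hx₀y₀⟩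
  · simp [(Fin.succ_ne_zero _).symm, hW _ (x _).2, hW _ (y _).2]
  · simp [Fin.succ_ne_zero, hW' _ (x _).2, hW' _ (y _).2]
  · simpa [Fin.succ_inj] using h _ _

end IsWilliamsonFamily

theorem separatingLeft_restrict_orthogonal {ω : LinearMap.BilinForm ℝ E}
    (hanti : ∀ v w, ω v w = -ω w v) (hnondeg : ω.SeparatingLeft) {U : Submodule ℝ E}
    [U.HasOrthogonalProjection]
    (hU : ∀ u ∈ U, ∀ w ∈ Uᗮ, ω u w = 0) : (ω.restrict Uᗮ).SeparatingLeft := by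
  intro v hv
  refine Subtype.ext (hnondeg v fun z => ?_)
  obtain ⟨p, hp, q, hq, rfl⟩ := U.exists_add_mem_mem_orthogonal z
  rw [map_add, hanti, hU p hp v v.2, neg_zero, zero_add]
  exact hv ⟨q, hq⟩

theorem finrank_span_pair_of_inner_eq_zero {x y : E} (hx : x ≠ 0) (hy : y ≠ 0)
    (hxy : ⟪x, y⟫ = 0) : finrank ℝ (Submodule.span ℝ {x, y}) = 2 := by
  have hli : LinearIndependent ℝ ![x, y] := by
    refine linearIndependent_of_ne_zero_of_inner_eq_zero (fun i => ?_) fun i j hij => ?_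
    · fin_cases i <;> simpa
    · fin_cases i <;> fin_cases j <;> simp_all [real_inner_comm]
  have hrange : Set.range ![x, y] = {x, y} := by
    rw [Matrix.range_cons, Matrix.range_cons, Matrix.range_empty, Set.union_empty,
      Set.singleton_union]
  rw [← hrange, finrank_span_eq_card hli, Fintype.card_fin]

variable [FiniteDimensional ℝ E]

noncomputable def LinearMap.BilinForm.sharp (ω : LinearMap.BilinForm ℝ E) : E →ₗ[ℝ] E where
  toFun v := (InnerProductSpace.toDual ℝ E).symm (ω v).toContinuousLinearMap
  map_add' v w := by simp
  map_smul' r v := by simp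

theorem LinearMap.BilinForm.inner_sharp_apply (ω : LinearMap.BilinForm ℝ E) (v w : E) :
    ⟪ω.sharp v, w⟫ = ω v w :=
  InnerProductSpace.toDual_symm_apply

theorem exists_rotation_pair [Nontrivial E] {J : E →ₗ[ℝ] E}
    (hJ : ∀ v w, ⟪J v, w⟫ = -⟪v, J w⟫) (hJinj : Function.Injective J) :
    ∃ r : ℝ, 0 < r ∧ ∃ x y : E,
      x ≠ 0 ∧ ⟪x, x⟫ = ⟪y, y⟫ ∧ ⟪x, y⟫ = 0 ∧ J x = r • y ∧ J y = -(r • x) := by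
  have hT : (-(J ∘ₗ J)).IsSymmetric := fun v w => by
    simp only [LinearMap.neg_apply, LinearMap.comp_apply, inner_neg_left, inner_neg_right,
      hJ (J v), hJ v, neg_neg]
  obtain ⟨c, hc⟩ : ∃ c, Module.End.HasEigenvalue (-(J ∘ₗ J)) c :=
    ⟨_, hT.hasEigenvalue_iSup_of_finiteDimensional⟩
  obtain ⟨e, he⟩ := hc.exists_hasEigenvector
  have he0 : e ≠ 0 := he.2
  have hJJe : J (J e) = -(c • e) := by
    rw [← he.apply_eq_smul]; simp
  have heJe : ⟪e, J e⟫ = 0 := by linarith [hJ e e, real_inner_comm e (J e)]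
  have hJe : ⟪J e, J e⟫ = c * ⟪e, e⟫ := by
    rw [← neg_neg ⟪J e, J e⟫, ← hJ, hJJe, inner_neg_left, neg_neg, real_inner_smul_left]
  have hc_pos : 0 < c := by
    have hJe0 : J e ≠ 0 := fun h => he0 (hJinj (h.trans (map_zero J).symm))
    have := real_inner_self_pos.2 hJe0
    rw [hJe] at this
    exact pos_of_mul_pos_left this (real_inner_self_nonneg)
  set r := √c
  have hr : 0 < r := Real.sqrt_pos.2 hc_pos
  have hrr : r * r = c := Real.mul_self_sqrt hc_pos.le
  refine ⟨r, hr, e, r⁻¹ • J e, he0, ?_, ?_, ?_, ?_⟩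
  · rw [real_inner_smul_left, real_inner_smul_right, hJe, ← hrr]
    field_simp
  · rw [real_inner_smul_right, heJe, mul_zero]
  · rw [smul_inv_smul₀ hr.ne']
  · rw [map_smul, hJJe, ← hrr, smul_neg, smul_smul, inv_mul_cancel_left₀ hr.ne']

theorem exists_williamson_pair [Nontrivial E] (ω : LinearMap.BilinForm ℝ E)
    (hanti : ∀ v w, ω v w = -ω w v) (hnondeg : ω.SeparatingLeft) :
    ∃ (x y : E) (μ : ℝ), 0 < μ ∧ ⟪x, x⟫ = μ ∧ ⟪y, y⟫ = μ ∧ ⟪x, y⟫ = 0 ∧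
      ∀ w, ω x w = μ⁻¹ * ⟪y, w⟫ ∧ ω y w = -(μ⁻¹ * ⟪x, w⟫) := by
  have hJ : ∀ v w, ⟪ω.sharp v, w⟫ = -⟪v, ω.sharp w⟫ := fun v w => by
    rw [ω.inner_sharp_apply, hanti, real_inner_comm, ω.inner_sharp_apply]
  have hJinj : Function.Injective ω.sharp := by
    rw [← LinearMap.ker_eq_bot, LinearMap.ker_eq_bot']
    exact fun v hv => hnondeg v fun w => by rw [← ω.inner_sharp_apply, hv, inner_zero_left]
  obtain ⟨r, hr, x, y, hx0, hxy_eq, hxy, hJx, hJy⟩ := exists_rotation_pair hJ hJinj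
  have hm : 0 < r * ⟪x, x⟫ := mul_pos hr (real_inner_self_pos.2 hx0)
  -- chosen so that `ω (a • x) (a • y) = a² r ⟪x, x⟫ = 1`
  set a := (√(r * ⟪x, x⟫))⁻¹
  have ha : a * a * ⟪x, x⟫ = r⁻¹ := by
    rw [← mul_inv, Real.mul_self_sqrt hm.le]
    field_simp
  refine ⟨a • x, a • y, r⁻¹, inv_pos.2 hr, ?_, ?_, ?_, fun w => ⟨?_, ?_⟩⟩
  · rw [real_inner_smul_left, real_inner_smul_right, ← mul_assoc, ha]
  · rw [real_inner_smul_left, real_inner_smul_right, ← mul_assoc, ← hxy_eq, ha]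
  · rw [real_inner_smul_left, real_inner_smul_right, hxy, mul_zero, mul_zero]
  · rw [← ω.inner_sharp_apply, map_smul, hJx, inv_inv, real_inner_smul_left,
      real_inner_smul_left, real_inner_smul_left]
    ring
  · rw [← ω.inner_sharp_apply, map_smul, hJy, inv_inv, real_inner_smul_left, inner_neg_left,
      real_inner_smul_left, real_inner_smul_left]
    ring

end InnerProductSpace

theorem exists_isWilliamsonFamily (n : ℕ) {E : Type*} [NormedAddCommGroup E]
    [InnerProductSpace ℝ E] [FiniteDimensional ℝ E] (hdim : finrank ℝ E = 2 * n)
    (ω : LinearMap.BilinForm ℝ E) (hanti : ∀ v w, ω v w = -ω w v) (hnondeg : ω.SeparatingLeft) :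
    ∃ (x y : Fin n → E) (μ : Fin n → ℝ), (∀ j, 0 < μ j) ∧ IsWilliamsonFamily ω x y μ := by
  induction n generalizing E with
  | zero => exact ⟨Fin.elim0, Fin.elim0, Fin.elim0, fun j => j.elim0, fun i => i.elim0⟩
  | succ k ih =>
    have : Nontrivial E := nontrivial_of_finrank_pos (by rw [hdim]; omega)
    obtain ⟨x, y, μ, hμ, hxx, hyy, hxy, hωxy⟩ := exists_williamson_pair ω hanti hnondeg
    set U := Submodule.span ℝ {x, y}
    have hperp : ∀ w ∈ Uᗮ, ω x w = 0 ∧ ω y w = 0 ∧ ⟪x, w⟫ = 0 ∧ ⟪y, w⟫ = 0 := fun w hw => by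
      have hxw : ⟪x, w⟫ = 0 := (U.mem_orthogonal w).1 hw x (Submodule.subset_span (by simp))
      have hyw : ⟪y, w⟫ = 0 := (U.mem_orthogonal w).1 hw y (Submodule.subset_span (by simp))
      simp [hωxy, hxw, hyw]
    have hωU : ∀ u ∈ U, ∀ w ∈ Uᗮ, ω u w = 0 := fun u hu w hw => by
      obtain ⟨a, b, rfl⟩ := Submodule.mem_span_pair.1 hu
      simp [(hperp w hw).1, (hperp w hw).2.1]
    have hx0 : x ≠ 0 := fun h => by simp [h] at hxx; linarith
    have hy0 : y ≠ 0 := fun h => by simp [h] at hyy; linarith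
    have hdimW : finrank ℝ Uᗮ = 2 * k := by
      have := U.finrank_add_finrank_orthogonal
      rw [finrank_span_pair_of_inner_eq_zero hx0 hy0 hxy, hdim] at this
      omega
    obtain ⟨x', y', μ', hμ', hfam⟩ := ih hdimW (ω.restrict Uᗮ) (fun v w => hanti v w)
      (separatingLeft_restrict_orthogonal hanti hnondeg hωU)
    refine ⟨_, _, Fin.cons μ μ', Fin.forall_fin_succ.2 ⟨hμ, hμ'⟩,
      hfam.cons hanti ?_ hxx hyy hxy hperp⟩
    rw [(hωxy y).1, hyy, inv_mul_cancel₀ hμ.ne']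

noncomputable abbrev QuadraticMap.PosDef.innerProductCore {V : Type*} [AddCommGroup V]
    [Module ℝ V] {f : QuadraticForm ℝ V} (hf : f.PosDef) : InnerProductSpace.Core ℝ V where
  inner v w := QuadraticMap.associated f v w
  conj_inner_symm v w := QuadraticMap.associated_isSymm ℝ f w v
  re_inner_nonneg v := by simpa [QuadraticMap.associated_eq_self_apply] using hf.nonneg v
  add_left u v w := by simp
  smul_left u v r := by simp
  definite v hv := hf.anisotropic v <| by
    rwa [← QuadraticMap.associated_eq_self_apply ℝ f v]

/-- Williamson's theorem: A positive-definite quadratic form f on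
a 2n-dimensional real symplectic vector space admits a symplectic basis
{x_j, y_j} and positive reals μ_j with f(Σ s_j x_j + t_j y_j)
= Σ μ_j (s_j² + t_j²). -/
theorem stmt4 {V : Type*} [AddCommGroup V] [Module ℝ V] [FiniteDimensional ℝ V]
    (n : ℕ) (hdim : Module.finrank ℝ V = 2 * n)
    (ω : LinearMap.BilinForm ℝ V)
    (hω_anti : ∀ v w : V, ω v w = - ω w v)
    (hω_nondeg : ∀ v : V, (∀ w : V, ω v w = 0) → v = 0)
    (f : QuadraticForm ℝ V) (hf : f.PosDef) :
    ∃ (b : Module.Basis (Fin n ⊕ Fin n) ℝ V) (mu : Fin n → ℝ),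
      (∀ j, 0 < mu j) ∧
      (∀ i j, ω (b (Sum.inl i)) (b (Sum.inr j)) = if i = j then 1 else 0) ∧
      (∀ i j, ω (b (Sum.inl i)) (b (Sum.inl j)) = 0) ∧
      (∀ i j, ω (b (Sum.inr i)) (b (Sum.inr j)) = 0) ∧
      ∀ s t : Fin n → ℝ,
        f (∑ j, (s j • b (Sum.inl j) + t j • b (Sum.inr j)))
          = ∑ j, mu j * ((s j) ^ 2 + (t j) ^ 2) := by
  let _ := hf.innerProductCore.toNormedAddCommGroup
  let _ := InnerProductSpace.ofCore hf.innerProductCore.toCore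
  have hf_inner : ∀ v : V, f v = ⟪v, v⟫ :=
    fun v => (QuadraticMap.associated_eq_self_apply ℝ f v).symm
  obtain ⟨x, y, mu, hmu, hfam⟩ := exists_isWilliamsonFamily n hdim ω hω_anti hω_nondeg
  let b := basisOfLinearIndependentOfCardEqFinrank' (Sum.elim x y) hfam.linearIndependent
    (by simp [hdim]; ring)
  have hb : ⇑b = Sum.elim x y := coe_basisOfLinearIndependentOfCardEqFinrank' _ _ _
  refine ⟨b, mu, hmu, fun i j => ?_, fun i j => ?_, fun i j => ?_, fun s t => ?_⟩
  all_goals simp only [hb, Sum.elim_inl, Sum.elim_inr]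
  exacts [(hfam i j).1, (hfam i j).2.1, (hfam i j).2.2.1,
    (hf_inner _).trans (hfam.inner_sum_self s t)]
end

section
/- (Matrix Williamson) For every symmetric positive-definite matrix M ∈ M_{2n}(ℝ) there exists a symplectic matrix S (satisfying SᵀJS = J, where J is the standard symplectic matrix) such that SᵀMS = diag(D, D) where D = diag(μ_1,…,μ_n) with all μ_j > 0, and the ±iμ_j are the eigenvalues of JM. -/
/-!
Write `M = Bᵀ B` with `B` invertible. The matrix `K = B⁻ᵀ J B⁻¹` is real, skew-symmetric and
invertible, so `iK` is Hermitian with nonzero eigenvalues; as `(iK)ᵀ = -iK` has the same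
characteristic polynomial, exactly half of them are positive. Unit eigenvectors `w_j` of `iK` for
the positive eigenvalues `μ_j` satisfy `w_jᴴ w_k = δ_jk` and, being orthogonal to the
eigenvectors `conj w_k` of eigenvalue `-μ_k`, also `w_jᵀ w_k = 0`. Hence `√2 Re w_j, √2 Im w_j`
form an orthogonal matrix `Q` bringing `K` to the normal form `[[0, -μ], [μ, 0]]`, and
`S = B⁻¹ Q diag(μ^(-1/2), μ^(-1/2))` is symplectic with `Sᵀ M S = diag(μ⁻¹, μ⁻¹)`.
Finally `S J Sᵀ = J` makes `J M` and `J Sᵀ M S` have the same characteristic polynomial.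
-/

open Matrix Polynomial

namespace Matrix

section ReIm

variable {l m n : Type*} [Fintype m]

theorem map_re_mul (A : Matrix l m ℂ) (B : Matrix m n ℂ) :
    (A * B).map Complex.re =
      A.map Complex.re * B.map Complex.re - A.map Complex.im * B.map Complex.im := by
  ext i k
  simp [mul_apply, Complex.re_sum, Finset.sum_sub_distrib]

theorem map_im_mul (A : Matrix l m ℂ) (B : Matrix m n ℂ) :
    (A * B).map Complex.im =
      A.map Complex.re * B.map Complex.im + A.map Complex.im * B.map Complex.re := by
  ext i k
  simp [mul_apply, Complex.im_sum, Finset.sum_add_distrib]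

omit [Fintype m] in
theorem conjTranspose_map_re (A : Matrix m n ℂ) : Aᴴ.map Complex.re = (A.map Complex.re)ᵀ := by
  ext i j
  simp

omit [Fintype m] in
theorem conjTranspose_map_im (A : Matrix m n ℂ) : Aᴴ.map Complex.im = -(A.map Complex.im)ᵀ := by
  ext i j
  simp

end ReIm

variable {ι m : Type*} [Fintype ι] [DecidableEq ι] [Fintype m] [DecidableEq m]

omit [DecidableEq ι] in
theorem dotProduct_eq_zero_of_transpose_eq_neg {F : Type*} [Field F] {K : Matrix ι ι F}
    (hK : Kᵀ = -K) {v w : ι → F} {a b : F} (hv : K *ᵥ v = a • v) (hw : K *ᵥ w = b • w)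
    (hab : a + b ≠ 0) : v ⬝ᵥ w = 0 := by
  have h : b * (v ⬝ᵥ w) = -(a * (v ⬝ᵥ w)) := by
    rw [← smul_eq_mul, ← dotProduct_smul, ← hw, dotProduct_mulVec, ← mulVec_transpose, hK,
      neg_mulVec, hv, neg_dotProduct, smul_dotProduct, smul_eq_mul]
  have : (a + b) * (v ⬝ᵥ w) = 0 := by linear_combination h
  exact (mul_eq_zero.mp this).resolve_left hab

theorem IsHermitian.charpoly_neg {𝕜 : Type*} [RCLike 𝕜] {A : Matrix ι ι 𝕜}
    (hA : A.IsHermitian) : (-A).charpoly = ∏ i, (X - C (-(hA.eigenvalues i : 𝕜))) := by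
  conv_lhs => rw [hA.spectral_theorem, Unitary.conjStarAlgAut_apply, ← Matrix.neg_mul,
    ← Matrix.mul_neg, charpoly_mul_comm, ← mul_assoc]
  simp [charpoly_diagonal]

theorem IsHermitian.card_pos_eigenvalues_eq_card_neg {𝕜 : Type*} [RCLike 𝕜]
    {A : Matrix ι ι 𝕜} (hA : A.IsHermitian) (h : (-A).charpoly = A.charpoly) :
    Fintype.card {i // 0 < hA.eigenvalues i} = Fintype.card {i // hA.eigenvalues i < 0} := by
  have hroots := congrArg Polynomial.roots h
  rw [hA.charpoly_neg, hA.roots_charpoly_eq_eigenvalues,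
    Polynomial.roots_prod _ _ (Finset.prod_ne_zero_iff.mpr fun i _ => X_sub_C_ne_zero _)] at hroots
  have hmap : (Finset.univ.val.map fun i => -hA.eigenvalues i) =
      Finset.univ.val.map hA.eigenvalues := by
    apply Multiset.map_injective (RCLike.ofReal_injective (K := 𝕜))
    simpa [Multiset.map_map, Function.comp_def] using hroots
  have hcount := congrArg (Multiset.countP (· < 0)) hmap
  simp only [Multiset.countP_map, neg_lt_zero] at hcount
  simpa [Fintype.card_subtype, Finset.card, Finset.filter_val] using hcount

omit [DecidableEq ι] in
theorem exists_orthogonal_of_eigenvectors {K : Matrix ι ι ℝ} {W : Matrix ι m ℂ} {μ : m → ℝ}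
    (hW : Wᴴ * W = 1) (hW' : Wᵀ * W = 0)
    (hKW : K.map Complex.ofReal * W = W * diagonal (fun j => -(μ j * Complex.I))) :
    ∃ Q : Matrix ι (m ⊕ m) ℝ,
      Qᵀ * Q = 1 ∧ K * Q = Q * fromBlocks 0 (-diagonal μ) (diagonal μ) 0 := by
  have hre := congrArg (map · Complex.re) hW
  have him := congrArg (map · Complex.im) hW
  have hre' := congrArg (map · Complex.re) hW'
  have him' := congrArg (map · Complex.im) hW'
  have hKre := congrArg (map · Complex.re) hKW
  have hKim := congrArg (map · Complex.im) hKW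
  have h1im : (1 : Matrix m m ℂ).map Complex.im = 0 := by
    ext i j
    by_cases h : i = j <;> simp [h]
  have hK0 : (K.map fun _ => (0 : ℝ)) = 0 := rfl
  simp only [map_re_mul, map_im_mul, conjTranspose_map_re, conjTranspose_map_im,
    transpose_map, h1im] at hre him hre' him' hKre hKim
  simp only [Matrix.neg_mul, sub_neg_eq_add, Complex.zero_re, Complex.one_re, Matrix.map_one,
    Matrix.map_zero, Complex.zero_im, map_map, Function.comp_def, Complex.ofReal_re, map_id',
    Complex.ofReal_im, hK0, Matrix.zero_mul, sub_zero, diagonal_map, Complex.neg_re, Complex.mul_re,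
    Complex.I_re, mul_zero, Complex.I_im, mul_one, sub_self, neg_zero, diagonal_zero,
    Matrix.mul_zero, Complex.neg_im, Complex.mul_im, add_zero, zero_sub] at hre him hre' him' hKre hKim
  set X := W.map Complex.re
  set Y := W.map Complex.im
  have hXX : Xᵀ * X = (2⁻¹ : ℝ) • 1 := by
    linear_combination (norm := module) (2⁻¹ : ℝ) • hre + (2⁻¹ : ℝ) • hre'
  have hYY : Yᵀ * Y = (2⁻¹ : ℝ) • 1 := by
    linear_combination (norm := module) (2⁻¹ : ℝ) • hre - (2⁻¹ : ℝ) • hre'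
  have hXY : Xᵀ * Y = 0 := by
    linear_combination (norm := module) (2⁻¹ : ℝ) • him + (2⁻¹ : ℝ) • him'
  have hYX : Yᵀ * X = 0 := by
    linear_combination (norm := module) (2⁻¹ : ℝ) • him' - (2⁻¹ : ℝ) • him
  refine ⟨√2 • fromCols X Y, ?_, ?_⟩
  · rw [transpose_smul, transpose_fromCols, Matrix.smul_mul, Matrix.mul_smul, smul_smul,
      fromRows_mul_fromCols, hXX, hYY, hXY, hYX, Real.mul_self_sqrt zero_le_two, fromBlocks_smul]
    simp [smul_smul]
  · rw [Matrix.mul_smul, Matrix.smul_mul, mul_fromCols, fromCols_mul_fromBlocks, hKre, hKim]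
    simp [← diagonal_neg]

section Skew

variable {K : Matrix ι ι ℝ}

omit [Fintype ι] [DecidableEq ι] in
theorem isHermitian_I_smul_map_ofReal (hK : Kᵀ = -K) :
    (Complex.I • K.map Complex.ofReal).IsHermitian := by
  ext i j
  have hij := congrFun (congrFun hK i) j
  simp only [transpose_apply, neg_apply] at hij
  simp [hij]

theorem charpoly_neg_I_smul_map_ofReal (hK : Kᵀ = -K) :
    (-(Complex.I • K.map Complex.ofReal)).charpoly =
      (Complex.I • K.map Complex.ofReal).charpoly := by
  conv_rhs => rw [← charpoly_transpose, transpose_smul, ← transpose_map, hK,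
    Matrix.map_neg _ Complex.ofReal_neg, smul_neg]

theorem eigenvalues_I_smul_map_ofReal_ne_zero (hK : Kᵀ = -K) (hKu : IsUnit K) (i : ι) :
    (isHermitian_I_smul_map_ofReal hK).eigenvalues i ≠ 0 := by
  have hdet : (Complex.I • K.map Complex.ofReal).det ≠ 0 := by
    have hmap : (K.map Complex.ofReal).det = (K.det : ℂ) :=
      (RingHom.map_det Complex.ofRealHom K).symm
    rw [det_smul, hmap]
    exact mul_ne_zero (pow_ne_zero _ Complex.I_ne_zero)
      (Complex.ofReal_ne_zero.mpr ((isUnit_iff_isUnit_det K).mp hKu).ne_zero)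
  rw [(isHermitian_I_smul_map_ofReal hK).det_eq_prod_eigenvalues, Finset.prod_ne_zero_iff] at hdet
  exact fun h => hdet i (Finset.mem_univ i) (by simp [h])

theorem map_ofReal_mulVec_eigenvectorBasis (hK : Kᵀ = -K) (k : ι) :
    K.map Complex.ofReal *ᵥ ⇑((isHermitian_I_smul_map_ofReal hK).eigenvectorBasis k) =
      (-((isHermitian_I_smul_map_ofReal hK).eigenvalues k * Complex.I)) •
        ⇑((isHermitian_I_smul_map_ofReal hK).eigenvectorBasis k) := by
  have h := (isHermitian_I_smul_map_ofReal hK).mulVec_eigenvectorBasis k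
  rw [smul_mulVec] at h
  have h' := congrArg ((-Complex.I) • ·) h
  simp only [smul_smul, neg_mul, Complex.I_mul_I, neg_neg, one_smul] at h'
  rw [h', RCLike.real_smul_eq_coe_smul (K := ℂ), smul_smul]
  congr 1
  simp only [Complex.coe_algebraMap]
  ring

end Skew

section SkewNormalForm

variable {K : Matrix (m ⊕ m) (m ⊕ m) ℝ}

theorem card_pos_eigenvalues_I_smul_map_ofReal (hK : Kᵀ = -K) (hKu : IsUnit K) :
    Fintype.card {k // 0 < (isHermitian_I_smul_map_ofReal hK).eigenvalues k} =
      Fintype.card m := by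
  set d := (isHermitian_I_smul_map_ofReal hK).eigenvalues
  have hpos_neg : Fintype.card {k // 0 < d k} = Fintype.card {k // d k < 0} :=
    (isHermitian_I_smul_map_ofReal hK).card_pos_eigenvalues_eq_card_neg
      (charpoly_neg_I_smul_map_ofReal hK)
  have hneg : Fintype.card {k // d k < 0} = Fintype.card {k // ¬ 0 < d k} :=
    Fintype.card_congr <| Equiv.subtypeEquivRight fun k =>
      ⟨fun h => not_lt.mpr h.le,
        fun h => lt_of_le_of_ne (not_lt.mp h) (eigenvalues_I_smul_map_ofReal_ne_zero hK hKu k)⟩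
  have hcompl := Fintype.card_subtype_compl (fun k => 0 < d k)
  rw [Fintype.card_sum] at hcompl
  omega

theorem exists_eigenvectors_of_transpose_eq_neg (hK : Kᵀ = -K) (hKu : IsUnit K) :
    ∃ (W : Matrix (m ⊕ m) m ℂ) (μ : m → ℝ), (∀ j, 0 < μ j) ∧ Wᴴ * W = 1 ∧ Wᵀ * W = 0 ∧
      K.map Complex.ofReal * W = W * diagonal (fun j => -(μ j * Complex.I)) := by
  set hH := isHermitian_I_smul_map_ofReal hK
  let e : m ≃ {k // 0 < hH.eigenvalues k} :=
    (Fintype.equivOfCardEq (card_pos_eigenvalues_I_smul_map_ofReal hK hKu)).symm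
  let f : m → m ⊕ m := fun j => e j
  have hf : Function.Injective f := Subtype.val_injective.comp e.injective
  refine ⟨(hH.eigenvectorUnitary : Matrix (m ⊕ m) (m ⊕ m) ℂ).submatrix id f,
    hH.eigenvalues ∘ f, fun j => (e j).2, ?_, ?_, ?_⟩
  · rw [conjTranspose_submatrix, ← submatrix_mul _ _ _ _ _ Function.bijective_id,
      ← star_eq_conjTranspose, Unitary.coe_star_mul_self, submatrix_one _ hf]
  · have hKc : (K.map Complex.ofReal)ᵀ = -K.map Complex.ofReal := by
      rw [← transpose_map, hK, Matrix.map_neg _ Complex.ofReal_neg]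
    ext j l
    refine dotProduct_eq_zero_of_transpose_eq_neg hKc
      (map_ofReal_mulVec_eigenvectorBasis hK (f j))
      (map_ofReal_mulVec_eigenvectorBasis hK (f l)) fun h => ?_
    have him := congrArg Complex.im h
    simp only [Complex.add_im, Complex.neg_im, Complex.mul_im, Complex.ofReal_re,
      Complex.ofReal_im, Complex.I_re, Complex.I_im, Complex.zero_im] at him
    linarith [(e j).2, (e l).2]
  · ext i j
    have h := congrFun (map_ofReal_mulVec_eigenvectorBasis hK (f j)) i
    rw [mul_diagonal, mul_apply]
    simp only [mulVec, dotProduct, Pi.smul_apply, smul_eq_mul] at h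
    simpa [mul_comm] using h

theorem exists_orthogonal_normal_form_of_transpose_eq_neg (hK : Kᵀ = -K) (hKu : IsUnit K) :
    ∃ (Q : Matrix (m ⊕ m) (m ⊕ m) ℝ) (μ : m → ℝ), (∀ j, 0 < μ j) ∧
      Qᵀ * Q = 1 ∧ K * Q = Q * fromBlocks 0 (-diagonal μ) (diagonal μ) 0 := by
  obtain ⟨W, μ, hμ, hW, hW', hKW⟩ := exists_eigenvectors_of_transpose_eq_neg hK hKu
  obtain ⟨Q, hQ, hKQ⟩ := exists_orthogonal_of_eigenvectors hW hW' hKW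
  exact ⟨Q, μ, hμ, hQ, hKQ⟩

end SkewNormalForm

open scoped MatrixOrder in
theorem PosDef.exists_mem_symplecticGroup_transpose_mul_mul_eq {M : Matrix (m ⊕ m) (m ⊕ m) ℝ}
    (hM : M.PosDef) :
    ∃ S ∈ symplecticGroup m ℝ, ∃ D : m → ℝ, (∀ j, 0 < D j) ∧
      Sᵀ * M * S = fromBlocks (diagonal D) 0 0 (diagonal D) := by
  obtain ⟨B, hB, rfl⟩ :=
    CStarAlgebra.isStrictlyPositive_iff_eq_star_mul_self.mp hM.isStrictlyPositive
  lift B to (Matrix (m ⊕ m) (m ⊕ m) ℝ)ˣ using hB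
  set C := ((B⁻¹ : (Matrix (m ⊕ m) (m ⊕ m) ℝ)ˣ) : Matrix (m ⊕ m) (m ⊕ m) ℝ)
  set K := Cᵀ * J m ℝ * C
  have hK : Kᵀ = -K := by simp [K, transpose_mul, J_transpose, Matrix.mul_assoc]
  have hKu : IsUnit K :=
    (((isUnit_transpose _).mpr (Units.isUnit _)).mul
      ((isUnit_iff_isUnit_det _).mpr (isUnit_det_J m ℝ))).mul (Units.isUnit _)
  obtain ⟨Q, μ, hμ, hQ, hKQ⟩ := exists_orthogonal_normal_form_of_transpose_eq_neg hK hKu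
  set R : Matrix (m ⊕ m) (m ⊕ m) ℝ :=
    fromBlocks (diagonal fun j => (√(μ j))⁻¹) 0 0 (diagonal fun j => (√(μ j))⁻¹)
  have hR : Rᵀ = R := by simp [R]
  have hrr : ∀ j, (√(μ j))⁻¹ * (√(μ j))⁻¹ = (μ j)⁻¹ := fun j => by
    rw [← mul_inv, Real.mul_self_sqrt (hμ j).le]
  have hrμr : ∀ j, (√(μ j))⁻¹ * μ j * (√(μ j))⁻¹ = 1 := fun j => by
    rw [mul_right_comm, hrr, inv_mul_cancel₀ (hμ j).ne']
  refine ⟨C * Q * R, ?_, fun j => (μ j)⁻¹, fun j => inv_pos.mpr (hμ j), ?_⟩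
  · rw [SymplecticGroup.mem_iff']
    calc (C * Q * R)ᵀ * J m ℝ * (C * Q * R) = R * (Qᵀ * (K * Q)) * R := by
          simp only [K, transpose_mul, hR, Matrix.mul_assoc]
      _ = R * fromBlocks 0 (-diagonal μ) (diagonal μ) 0 * R := by
          rw [hKQ, ← Matrix.mul_assoc Qᵀ, hQ, Matrix.one_mul]
      _ = J m ℝ := by
          simp [R, J, fromBlocks_multiply, hrμr, -fromBlocks_diagonal, ← diagonal_one]
  · have hBC : (B : Matrix (m ⊕ m) (m ⊕ m) ℝ) * C = 1 := B.mul_inv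
    calc (C * Q * R)ᵀ * (star ↑B * ↑B) * (C * Q * R) =
          R * (Qᵀ * ((↑B * C)ᵀ * (↑B * C)) * Q) * R := by
          simp only [transpose_mul, hR, star_eq_conjTranspose,
            conjTranspose_eq_transpose_of_trivial, Matrix.mul_assoc]
      _ = fromBlocks (diagonal fun j => (μ j)⁻¹) 0 0 (diagonal fun j => (μ j)⁻¹) := by
          simp [hBC, hQ, R, fromBlocks_multiply, hrr, -fromBlocks_diagonal]

theorem charpoly_mul_transpose_mul_mul {R : Type*} [CommRing R] {J₀ S : Matrix ι ι R}
    (hS : S * J₀ * Sᵀ = J₀) (M : Matrix ι ι R) :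
    (J₀ * (Sᵀ * M * S)).charpoly = (J₀ * M).charpoly := by
  rw [← Matrix.mul_assoc, ← Matrix.mul_assoc, charpoly_mul_comm, ← Matrix.mul_assoc,
    ← Matrix.mul_assoc, hS]

theorem charpoly_fromBlocks_diagonal_neg_diagonal (d : m → ℂ) :
    (fromBlocks 0 (diagonal d) (-diagonal d) 0).charpoly =
      ∏ j, (X - C (d j * Complex.I)) * (X + C (d j * Complex.I)) := by
  -- the columns of `T` are the eigenvectors `(e_j, ± i e_j)`
  let T : Matrix (m ⊕ m) (m ⊕ m) ℂ := fromBlocks 1 1 (Complex.I • 1) (-Complex.I • 1)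
  let T' : Matrix (m ⊕ m) (m ⊕ m) ℂ :=
    (2⁻¹ : ℂ) • fromBlocks 1 (-Complex.I • 1) 1 (Complex.I • 1)
  have hT : T' * T = 1 := by
    ext (i | i) (j | j) <;> by_cases h : i = j <;>
      simp [T, T', fromBlocks_multiply, one_apply, h] <;> ring_nf
  have hconj : fromBlocks 0 (diagonal d) (-diagonal d) 0 =
      T * fromBlocks (diagonal fun j => d j * Complex.I) 0 0
        (diagonal fun j => -(d j * Complex.I)) * T' := by
    simp only [T, T', Matrix.mul_smul, fromBlocks_multiply]
    ext (i | i) (j | j) <;> by_cases h : i = j <;> simp [h] <;> ring_nf <;> simp [Complex.I_sq]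
  rw [hconj, charpoly_mul_comm, ← mul_assoc, hT, one_mul, charpoly_fromBlocks_zero₁₂,
    charpoly_diagonal, charpoly_diagonal, ← Finset.prod_mul_distrib]
  simp [sub_eq_add_neg]

end Matrix

theorem stmt5_general (n : ℕ) (M : Matrix (Fin n ⊕ Fin n) (Fin n ⊕ Fin n) ℝ)
    (hM_pos : M.PosDef) :
    ∃ (S : Matrix (Fin n ⊕ Fin n) (Fin n ⊕ Fin n) ℝ) (D : Fin n → ℝ),
      let J : Matrix (Fin n ⊕ Fin n) (Fin n ⊕ Fin n) ℝ :=
        Matrix.fromBlocks 0 1 (-1) 0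
      Sᵀ * J * S = J ∧
      (∀ j, 0 < D j) ∧
      Sᵀ * M * S = Matrix.fromBlocks (Matrix.diagonal D) 0 0 (Matrix.diagonal D) ∧
      ((J * M).map (algebraMap ℝ ℂ)).charpoly
        = ∏ j : Fin n, ((X - C ((D j : ℂ) * Complex.I)) * (X + C ((D j : ℂ) * Complex.I))) := by
  obtain ⟨S, hS, D, hD, hSMS⟩ := hM_pos.exists_mem_symplecticGroup_transpose_mul_mul_eq
  have hJ : (fromBlocks 0 1 (-1) 0 : Matrix (Fin n ⊕ Fin n) (Fin n ⊕ Fin n) ℝ) = -J (Fin n) ℝ := by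
    simp [J, fromBlocks_neg]
  have hSJ : S * -J (Fin n) ℝ * Sᵀ = -J (Fin n) ℝ := by
    rw [Matrix.mul_neg, Matrix.neg_mul, SymplecticGroup.mem_iff.mp hS]
  refine ⟨S, D, ?_, hD, hSMS, ?_⟩
  · rw [hJ, Matrix.mul_neg, Matrix.neg_mul, SymplecticGroup.mem_iff'.mp hS]
  · rw [charpoly_map, hJ, ← charpoly_mul_transpose_mul_mul hSJ, hSMS, ← charpoly_map,
      ← charpoly_fromBlocks_diagonal_neg_diagonal]
    congr 1
    simp [J, fromBlocks_multiply, fromBlocks_neg, fromBlocks_map, diagonal_map,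
      -fromBlocks_diagonal]

/-- Matrix Williamson: Every symmetric positive-definite
M ∈ M_{2n}(ℝ) satisfies SᵀMS = diag(D,D) for some symplectic S, with
D = diag(μ_1,…,μ_n) positive and the ±iμ_j exactly the eigenvalues of JM
(expressed via the characteristic polynomial of JM over ℂ). -/
theorem stmt5 (n : ℕ) (M : Matrix (Fin n ⊕ Fin n) (Fin n ⊕ Fin n) ℝ)
    (hM_symm : M.IsSymm) (hM_pos : M.PosDef) :
    ∃ (S : Matrix (Fin n ⊕ Fin n) (Fin n ⊕ Fin n) ℝ) (D : Fin n → ℝ),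
      let J : Matrix (Fin n ⊕ Fin n) (Fin n ⊕ Fin n) ℝ :=
        Matrix.fromBlocks 0 1 (-1) 0
      Sᵀ * J * S = J ∧
      (∀ j, 0 < D j) ∧
      Sᵀ * M * S = Matrix.fromBlocks (Matrix.diagonal D) 0 0 (Matrix.diagonal D) ∧
      ((J * M).map (algebraMap ℝ ℂ)).charpoly
        = ∏ j : Fin n, ((X - C ((D j : ℂ) * Complex.I)) * (X + C ((D j : ℂ) * Complex.I))) :=
  stmt5_general n M hM_pos
end

section
/- Let f be a positive-semidefinite quadratic form on (V, ω) with associated map F. For every nonzero eigenvalue λ of F, the generalized eigenspace of F for λ equals the eigenspace: ker((F - λI)^{2n}) = ker(F - λI) in V^ℂ. -/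
open TensorProduct


private lemma quad_aux (c d : ℝ) (hd : 0 ≤ d) (h : ∀ t : ℝ, 0 ≤ t ^ 2 * d + 2 * t * c) :
    c = 0 := by
  have hd1 : (0:ℝ) < d + 1 := by linarith
  have ht := h (-c / (d + 1))
  have h4 : ((-c / (d + 1)) ^ 2 * d + 2 * (-c / (d + 1)) * c) * (d + 1) ^ 2
      = -(c ^ 2 * (d + 2)) := by
    field_simp
    ring
  have h5 : 0 ≤ -(c ^ 2 * (d + 2)) := by
    rw [← h4]
    exact mul_nonneg ht (by positivity)
  have h6 : c ^ 2 = 0 := le_antisymm (by nlinarith) (sq_nonneg c)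
  exact pow_eq_zero_iff two_ne_zero |>.mp h6

private lemma psd_zero {V : Type*} [AddCommGroup V] [Module ℝ V]
    (A : LinearMap.BilinForm ℝ V) (hA_symm : ∀ v w : V, A v w = A w v)
    (hApos : ∀ v : V, 0 ≤ A v v) (a : V) (ha : A a a = 0) (w : V) : A a w = 0 := by
  apply quad_aux (A a w) (A w w) (hApos w)
  intro t
  have h := hApos (a + t • w)
  simp only [map_add, map_smul, LinearMap.add_apply, LinearMap.smul_apply,
    smul_eq_mul] at h
  rw [ha] at h
  have hsymm := hA_symm a w
  have he : t ^ 2 * (A w) w + 2 * t * (A a) w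
      = 0 + t * (A w) a + t * ((A a) w + t * (A w) w) := by
    rw [hsymm]; ring
  rw [he]
  exact h

set_option maxHeartbeats 1000000 in
/-- For f positive-semidefinite on (V, ω) with associated map F,
every nonzero eigenvalue λ of the complexification of F has generalized
eigenspace ker((F - λI)^{2n}) equal to the eigenspace ker(F - λI). -/
theorem stmt9 {V : Type*} [AddCommGroup V] [Module ℝ V] [FiniteDimensional ℝ V]
    (n : ℕ) (hdim : Module.finrank ℝ V = 2 * n)
    (ω : LinearMap.BilinForm ℝ V)
    (hω_anti : ∀ v w : V, ω v w = - ω w v)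
    (hω_nondeg : ∀ v : V, (∀ w : V, ω v w = 0) → v = 0)
    (f : QuadraticForm ℝ V) (hf : ∀ v : V, 0 ≤ f v)
    (A : LinearMap.BilinForm ℝ V)
    (hA_symm : ∀ v w : V, A v w = A w v)
    (hAf : ∀ v : V, A v v = f v)
    (F : V →ₗ[ℝ] V)
    (hF : ∀ v w : V, A v w = ω v (F w))
    (lam : ℂ) (hlam : lam ≠ 0)
    (heig : Module.End.HasEigenvalue (LinearMap.baseChange ℂ F) lam) :
    LinearMap.ker (((LinearMap.baseChange ℂ F : Module.End ℂ (ℂ ⊗[ℝ] V))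
        - lam • (1 : Module.End ℂ (ℂ ⊗[ℝ] V))) ^ (2 * n))
      = LinearMap.ker ((LinearMap.baseChange ℂ F : Module.End ℂ (ℂ ⊗[ℝ] V))
        - lam • (1 : Module.End ℂ (ℂ ⊗[ℝ] V))) := by
  classical
  set Fc : Module.End ℂ (ℂ ⊗[ℝ] V) := LinearMap.baseChange ℂ F with hFcdef
  set g : Module.End ℂ (ℂ ⊗[ℝ] V) := Fc - lam • 1 with hgdef
  have hg_apply : ∀ x, g x = Fc x - lam • x := by
    intro x
    simp [hgdef, LinearMap.sub_apply]
  -- decomposition of elements of the complexification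
  have hdecomp : ∀ x : ℂ ⊗[ℝ] V, ∃ a b : V,
      x = (1 : ℂ) ⊗ₜ[ℝ] a + Complex.I ⊗ₜ[ℝ] b := by
    intro x
    induction x using TensorProduct.induction_on with
    | zero => exact ⟨0, 0, by simp⟩
    | tmul c v =>
      refine ⟨c.re • v, c.im • v, ?_⟩
      rw [← TensorProduct.smul_tmul, ← TensorProduct.smul_tmul, ← TensorProduct.add_tmul]
      congr 1
      simp only [Complex.real_smul, smul_eq_mul, mul_comm]
      rw [mul_comm Complex.I]
      simpa using (Complex.re_add_im c).symm
    | add x y hx hy =>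
      obtain ⟨a, b, rfl⟩ := hx
      obtain ⟨a', b', rfl⟩ := hy
      exact ⟨a + a', b + b', by rw [TensorProduct.tmul_add, TensorProduct.tmul_add]; abel⟩
  -- conjugation on the complexification
  set σ : ℂ ⊗[ℝ] V →ₗ[ℝ] ℂ ⊗[ℝ] V :=
    LinearMap.rTensor V (Complex.conjAe.toLinearMap) with hσdef
  have hσ_tmul : ∀ (c : ℂ) (v : V), σ (c ⊗ₜ[ℝ] v) = (starRingEnd ℂ c) ⊗ₜ[ℝ] v := by
    intro c v
    simp [hσdef]
  have hσ_smul : ∀ (μ : ℂ) (x : ℂ ⊗[ℝ] V), σ (μ • x) = (starRingEnd ℂ μ) • σ x := by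
    intro μ x
    induction x using TensorProduct.induction_on with
    | zero => simp
    | tmul c v =>
      rw [TensorProduct.smul_tmul', hσ_tmul, hσ_tmul, TensorProduct.smul_tmul']
      simp [smul_eq_mul]
    | add x y hx hy => rw [smul_add, map_add, hx, hy, map_add, smul_add]
  have hσF : ∀ x : ℂ ⊗[ℝ] V, σ (Fc x) = Fc (σ x) := by
    intro x
    induction x using TensorProduct.induction_on with
    | zero => simp
    | tmul c v =>
      rw [hFcdef, LinearMap.baseChange_tmul, hσ_tmul, hσ_tmul, LinearMap.baseChange_tmul]
    | add x y hx hy => simp only [map_add, hx, hy]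
  -- complexified bilinear forms
  set Ω : LinearMap.BilinForm ℂ (ℂ ⊗[ℝ] V) := LinearMap.BilinForm.baseChange ℂ ω with hΩdef
  set B : LinearMap.BilinForm ℂ (ℂ ⊗[ℝ] V) := LinearMap.BilinForm.baseChange ℂ A with hBdef
  have hΩ_tmul : ∀ (c d : ℂ) (v w : V),
      Ω (c ⊗ₜ[ℝ] v) (d ⊗ₜ[ℝ] w) = (ω v w : ℝ) • (c * d) := by
    intro c d v w
    simp [hΩdef]
  have hB_tmul : ∀ (c d : ℂ) (v w : V),
      B (c ⊗ₜ[ℝ] v) (d ⊗ₜ[ℝ] w) = (A v w : ℝ) • (c * d) := by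
    intro c d v w
    simp [hBdef]
  -- real identities
  have hωF : ∀ v w : V, ω (F v) w = - ω v (F w) := by
    intro v w
    rw [hω_anti, ← hF, hA_symm, hF]
  -- skewness of Fc with respect to Ω
  have hskew : ∀ x y : ℂ ⊗[ℝ] V, Ω (Fc x) y = - Ω x (Fc y) := by
    intro x y
    induction x using TensorProduct.induction_on with
    | zero => simp
    | tmul c v =>
      induction y using TensorProduct.induction_on with
      | zero => simp
      | tmul d w =>
        rw [hFcdef, LinearMap.baseChange_tmul, LinearMap.baseChange_tmul,
          hΩ_tmul, hΩ_tmul, hωF, neg_smul]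
      | add y₁ y₂ h1 h2 =>
        simp only [map_add, LinearMap.add_apply, h1, h2]
        ring
    | add x₁ x₂ h1 h2 =>
      simp only [map_add, LinearMap.add_apply, h1, h2]
      ring
  -- B in terms of Ω and Fc
  have hBΩ : ∀ x y : ℂ ⊗[ℝ] V, B x y = Ω x (Fc y) := by
    intro x y
    induction x using TensorProduct.induction_on with
    | zero => simp
    | tmul c v =>
      induction y using TensorProduct.induction_on with
      | zero => simp
      | tmul d w =>
        rw [hFcdef, LinearMap.baseChange_tmul, hB_tmul, hΩ_tmul, hF]
      | add y₁ y₂ h1 h2 => simp only [map_add, LinearMap.add_apply, h1, h2]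
    | add x₁ x₂ h1 h2 =>
      simp only [map_add, LinearMap.add_apply, h1, h2]
  -- nondegeneracy of Ω
  have hΩnd : ∀ x : ℂ ⊗[ℝ] V, (∀ w : V, Ω x ((1 : ℂ) ⊗ₜ[ℝ] w) = 0) → x = 0 := by
    intro x hx
    obtain ⟨a, b, rfl⟩ := hdecomp x
    have key : ∀ w : V, ω a w = 0 ∧ ω b w = 0 := by
      intro w
      have h := hx w
      simp only [map_add, LinearMap.add_apply, hΩ_tmul] at h
      simp only [one_mul, Complex.real_smul, mul_one] at h
      rw [Complex.ext_iff] at h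
      simpa using h
    have ha : a = 0 := hω_nondeg a fun w => (key w).1
    have hb : b = 0 := hω_nondeg b fun w => (key w).2
    rw [ha, hb]
    simp
  -- positivity: A v v = 0 forces A v w = 0 for all w
  have hApos : ∀ v : V, 0 ≤ A v v := fun v => (hAf v) ▸ hf v
  have hA_ps : ∀ a : V, A a a = 0 → ∀ w : V, A a w = 0 :=
    fun a ha w => psd_zero A hA_symm hApos a ha w
  -- the key step: ker g² ≤ ker g
  have hker2 : ∀ y : ℂ ⊗[ℝ] V, g (g y) = 0 → g y = 0 := by
    intro y hy
    set x : ℂ ⊗[ℝ] V := g y with hxdef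
    have hx : Fc x = lam • x := by
      have h := hy
      rw [hg_apply] at h
      rwa [sub_eq_zero] at h
    have hσx : Fc (σ x) = (starRingEnd ℂ lam) • σ x := by
      rw [← hσF, hx, hσ_smul]
    -- (lam + conj lam) * Ω x (σ x) = 0
    have h1 : (lam + starRingEnd ℂ lam) * Ω x (σ x) = 0 := by
      have e1 : Ω (Fc x) (σ x) = lam * Ω x (σ x) := by
        rw [hx, map_smul, LinearMap.smul_apply, smul_eq_mul]
      have e2 : Ω (Fc x) (σ x) = - (starRingEnd ℂ lam * Ω x (σ x)) := by
        rw [hskew, ← hσF, hx, hσ_smul, map_smul, smul_eq_mul]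
      have := e1.symm.trans e2
      linear_combination this
    -- B x (σ x) = conj lam * Ω x (σ x)
    have h2 : B x (σ x) = starRingEnd ℂ lam * Ω x (σ x) := by
      rw [hBΩ, hσx, map_smul, smul_eq_mul]
    -- B x (σ x) = -(lam + conj lam) * B y (σ x)
    have h3 : B x (σ x) = -(lam + starRingEnd ℂ lam) * B y (σ x) := by
      have e0 : B x (σ x) = B (Fc y) (σ x) - lam * B y (σ x) := by
        rw [hxdef, hg_apply, map_sub, LinearMap.sub_apply, map_smul,
          LinearMap.smul_apply, smul_eq_mul]
      have e1 : B (Fc y) (σ x) = - (starRingEnd ℂ lam * B y (σ x)) := by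
        rw [hBΩ, hskew, hσx, map_smul, map_smul, smul_eq_mul, ← hBΩ]
      rw [e0, e1]
      ring
    have hzero : B x (σ x) = 0 := by
      by_cases hts : lam + starRingEnd ℂ lam = 0
      · rw [h3, hts]
        ring
      · rcases mul_eq_zero.mp h1 with h | h
        · exact absurd h hts
        · rw [h2, h, mul_zero]
    -- deduce x = 0
    obtain ⟨a, b, hab⟩ := hdecomp x
    have hBval : B x (σ x) = ((A a a + A b b : ℝ) : ℂ) := by
      have eσ : σ ((1 : ℂ) ⊗ₜ[ℝ] a + Complex.I ⊗ₜ[ℝ] b)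
          = (1 : ℂ) ⊗ₜ[ℝ] a + (-Complex.I) ⊗ₜ[ℝ] b := by
        rw [map_add, hσ_tmul, hσ_tmul, map_one, Complex.conj_I]
      rw [hab, eσ]
      simp only [map_add, LinearMap.add_apply, hB_tmul]
      simp only [Complex.real_smul]
      rw [hA_symm b a]
      push_cast
      ring_nf
      simp only [Complex.I_sq]
      ring
    have hsum : A a a + A b b = 0 := by
      have := hzero.symm.trans hBval
      exact_mod_cast this.symm
    have haa : A a a = 0 := le_antisymm (by linarith [hApos a, hApos b]) (hApos a)
    have hbb : A b b = 0 := le_antisymm (by linarith [hApos a, hApos b]) (hApos b)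
    have hBx : ∀ z : ℂ ⊗[ℝ] V, B x z = 0 := by
      intro z
      obtain ⟨p, q, rfl⟩ := hdecomp z
      rw [hab]
      simp only [map_add, LinearMap.add_apply, hB_tmul,
        hA_ps a haa p, hA_ps a haa q, hA_ps b hbb p, hA_ps b hbb q]
      simp
    have hFx0 : Fc x = 0 := by
      apply hΩnd
      intro w
      have := hskew x ((1 : ℂ) ⊗ₜ[ℝ] w)
      rw [this, ← hBΩ, hBx]
      ring
    have hlx : lam • x = 0 := hx ▸ hFx0
    have hx0 : x = 0 := by
      have h := congrArg (fun z => lam⁻¹ • z) hlx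
      simpa [smul_smul, inv_mul_cancel₀ hlam] using h
    exact hx0
  -- powers
  rcases Nat.eq_zero_or_pos n with h0 | hpos
  · subst h0
    have hsub : Subsingleton V := by
      rw [mul_zero] at hdim
      exact Module.finrank_zero_iff.mp hdim
    have hsub2 : ∀ z : ℂ ⊗[ℝ] V, z = 0 := by
      intro z
      induction z using TensorProduct.induction_on with
      | zero => rfl
      | tmul c v => rw [Subsingleton.elim v 0]; simp
      | add x y hx hy => rw [hx, hy, add_zero]
    ext z
    simp [hsub2 z]
  · have key : ∀ k : ℕ, LinearMap.ker (g ^ (k + 1)) = LinearMap.ker g := by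
      intro k
      induction k with
      | zero => rw [pow_one]
      | succ k ih =>
        ext z
        simp only [LinearMap.mem_ker]
        constructor
        · intro hz
          have h1 : (g ^ (k + 1)) (g z) = 0 := by
            rw [← Module.End.mul_apply, ← pow_succ]
            exact hz
          have h2 : g z ∈ LinearMap.ker (g ^ (k + 1)) := h1
          rw [ih] at h2
          exact hker2 z h2
        · intro hz
          rw [pow_succ, Module.End.mul_apply, hz, map_zero]
    obtain ⟨m, hm⟩ : ∃ m, 2 * n = m + 1 := ⟨2 * n - 1, by omega⟩
    rw [hm, key m]
end

section
/- (Hörmander, semidefinite case with symplectic kernel) Let f be a positive-semidefinite quadratic form on a 2n-dimensional symplectic vector space (V, ω) with associated map F, and suppose Ker(F) is a symplectic subspace of V. Then there exist a symplectic basis {x_1,…,x_n,y_1,…,y_n} of V, an integer 0 ≤ k ≤ n, and positive reals μ_1,…,μ_k such that f(Σ_j (s_j x_j + t_j y_j)) = Σ_{j=1}^k μ_j (s_j² + t_j²). -/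
/-!
The polarization of `f` is `A(u, w) = ω(u, F w)`, so `ω(u, F w) = ω(w, F u)`. Hence `F` maps `V`
into `W = (ker F)^ω`, and `V = ker F ⊕ W` because `ker F` is symplectic. On `W` the form
`v ↦ ω(v, F v)` is positive definite (a semidefinite form vanishes only on its radical, which is
`ker F`), so it is an inner product for which `F²` is symmetric. An eigenvector `v` of `F²` has
`F² v = -μ² v` with `μ > 0`, and rescaling `v, F v` gives a symplectic pair `(x, y)` with
`F x = μ y`, `F y = -μ x`. Its ω-complement in `W` is again symplectic and `F`-invariant, so
induction yields such a basis of `W`; any symplectic basis of `ker F` completes it with `μ = 0`.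
In the resulting basis, `f(v) = ω(v, F v) = Σ μⱼ (sⱼ² + tⱼ²)`.
-/

open Module Submodule LinearMap.BilinForm
open LinearMap (BilinForm ker)

section SymplecticFamily

variable {R V ι : Type*} [CommRing R] [AddCommGroup V] [Module R V] [DecidableEq ι]

structure IsSymplecticFamily (ω : BilinForm R V) (x y : ι → V) : Prop where
  left_right : ∀ i j, ω (x i) (y j) = if i = j then 1 else 0
  left_left : ∀ i j, ω (x i) (x j) = 0
  right_right : ∀ i j, ω (y i) (y j) = 0

variable {ω : BilinForm R V} {x y : ι → V}

theorem isSymplecticFamily_singleton (hω : ω.IsAlt) {x₀ y₀ : V} (h : ω x₀ y₀ = 1) :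
    IsSymplecticFamily ω ![x₀] ![y₀] where
  left_right i j := by simp [Subsingleton.elim i j, h]
  left_left i j := by simp [hω.self_eq_zero]
  right_right i j := by simp [hω.self_eq_zero]

theorem IsSymplecticFamily.append {m m' : ℕ} {x y : Fin m → V} {x' y' : Fin m' → V}
    (h : IsSymplecticFamily ω x y) (h' : IsSymplecticFamily ω x' y') (hω : ω.IsRefl)
    {U U' : Submodule R V} (hU : ∀ i, x i ∈ U ∧ y i ∈ U) (hU' : ∀ j, x' j ∈ U' ∧ y' j ∈ U')
    (hUU' : U ≤ ω.orthogonal U') :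
    IsSymplecticFamily ω (Fin.append x x') (Fin.append y y') := by
  have hortho : ∀ u ∈ U, ∀ u' ∈ U', ω u u' = 0 ∧ ω u' u = 0 :=
    fun u hu u' hu' => ⟨hω _ _ (hUU' hu u' hu'), hUU' hu u' hu'⟩
  have hne (i : Fin m) (j : Fin m') : Fin.castAdd m' i ≠ Fin.natAdd m j := by
    simp only [ne_eq, Fin.ext_iff, Fin.val_castAdd, Fin.val_natAdd]; omega
  constructor <;> intro i j <;> induction i using Fin.addCases <;>
    induction j using Fin.addCases <;>
    simp [hne, (hne _ _).symm, h.left_right, h.left_left, h.right_right, h'.left_right,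
      h'.left_left, h'.right_right, hortho _ (hU _).1 _ (hU' _).1, hortho _ (hU _).1 _ (hU' _).2,
      hortho _ (hU _).2 _ (hU' _).1, hortho _ (hU _).2 _ (hU' _).2]

namespace IsSymplecticFamily

variable [Fintype ι] (h : IsSymplecticFamily ω x y) (hω : ω.IsAlt) (s t : ι → R)
include h

theorem left_apply_sum (j : ι) : ω (x j) (∑ i, (s i • x i + t i • y i)) = t j := by
  simp [h.left_left, h.left_right]

include hω

theorem right_apply_sum (j : ι) : ω (y j) (∑ i, (s i • x i + t i • y i)) = -s j := by
  simp [h.right_right, ← hω.neg_eq (x _) (y j), h.left_right, eq_comm]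

theorem apply_sum_sum (s' t' : ι → R) :
    ω (∑ i, (s i • x i + t i • y i)) (∑ i, (s' i • x i + t' i • y i)) =
      ∑ i, (s i * t' i - t i * s' i) := by
  rw [map_sum ω, LinearMap.sum_apply]
  simp only [map_add, map_smul, LinearMap.add_apply, LinearMap.smul_apply, smul_eq_mul,
    h.left_apply_sum, h.right_apply_sum hω]
  exact Finset.sum_congr rfl fun i _ => by ring

theorem linearIndependent : LinearIndependent R (Sum.elim x y) := by
  rw [Fintype.linearIndependent_iff]
  intro g hg
  have hsum : ∑ i, (g (.inl i) • x i + g (.inr i) • y i) = 0 := by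
    rw [Finset.sum_add_distrib, ← hg, Fintype.sum_sum_type]; rfl
  rintro (i | i)
  · simpa [hsum] using h.right_apply_sum hω (g ∘ .inl) (g ∘ .inr) i
  · simpa [hsum] using (h.left_apply_sum (g ∘ .inl) (g ∘ .inr) i).symm

theorem apply_sum_map_sum {F : V →ₗ[R] V} {μ : ι → R}
    (hF : ∀ i, F (x i) = μ i • y i ∧ F (y i) = -μ i • x i) :
    ω (∑ i, (s i • x i + t i • y i)) (F (∑ i, (s i • x i + t i • y i))) =
      ∑ i, μ i * (s i ^ 2 + t i ^ 2) := by
  have hFsum : F (∑ i, (s i • x i + t i • y i)) =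
      ∑ i, ((-(μ i * t i)) • x i + (μ i * s i) • y i) := by
    simp only [map_sum, map_add, map_smul, hF, smul_smul, neg_smul, smul_neg]
    exact Finset.sum_congr rfl fun i _ => by rw [add_comm, mul_comm (s i), mul_comm (t i)]
  rw [hFsum, h.apply_sum_sum hω]
  exact Finset.sum_congr rfl fun i _ => by ring

end IsSymplecticFamily

end SymplecticFamily

section SymplecticComplement

variable {𝕜 V : Type*} [Field 𝕜] [AddCommGroup V] [Module 𝕜 V] {ω : BilinForm 𝕜 V}
  {P U : Submodule 𝕜 V}

theorem IsSymplecticFamily.exists_basis [FiniteDimensional 𝕜 V] {ι : Type*} [Fintype ι]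
    [DecidableEq ι] {x y : ι → V} (h : IsSymplecticFamily ω x y) (hω : ω.IsAlt)
    (hcard : finrank 𝕜 V = 2 * Fintype.card ι) :
    ∃ b : Basis (ι ⊕ ι) 𝕜 V, ∀ i, b (.inl i) = x i ∧ b (.inr i) = y i := by
  have hli := h.linearIndependent hω
  refine ⟨Basis.mk hli (hli.span_eq_top_of_card_eq_finrank' ?_).ge, fun i => ?_⟩
  · simp [hcard, two_mul]
  · simp

theorem sup_orthogonal_inf_eq [FiniteDimensional 𝕜 V] (hω : ω.IsRefl)
    (hP : Disjoint P (ω.orthogonal P)) (hPU : P ≤ U) : P ⊔ (ω.orthogonal P ⊓ U) = U := by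
  rw [← sup_inf_assoc_of_le _ hPU, ((isCompl_orthogonal_iff_disjoint hω).2 hP).sup_eq_top,
    top_inf_eq]

theorem disjoint_orthogonal_inf [FiniteDimensional 𝕜 V] (hω : ω.IsRefl)
    (hP : Disjoint P (ω.orthogonal P)) (hPU : P ≤ U) (hU : Disjoint U (ω.orthogonal U)) :
    Disjoint (ω.orthogonal P ⊓ U) (ω.orthogonal (ω.orthogonal P ⊓ U)) := by
  rw [disjoint_def]
  rintro v ⟨hvP, hvU⟩ hv
  refine disjoint_def.1 hU v hvU fun u hu => ?_
  obtain ⟨p, hp, u', hu', rfl⟩ := mem_sup.1 ((sup_orthogonal_inf_eq hω hP hPU).ge hu)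
  rw [map_add, LinearMap.add_apply, hvP p hp, hv u' hu', add_zero]

theorem map_mem_orthogonal {F : V →ₗ[𝕜] V} (hω : ω.IsRefl)
    (hF : ∀ u w, ω u (F w) = ω w (F u)) (hP : ∀ v ∈ P, F v ∈ P) :
    ∀ w ∈ ω.orthogonal P, F w ∈ ω.orthogonal P :=
  fun w hw p hp => by rw [hF]; exact hω _ _ (hw _ (hP p hp))

theorem exists_apply_eq_one (hU : U ≠ ⊥) (hUo : Disjoint U (ω.orthogonal U)) :
    ∃ x ∈ U, ∃ y ∈ U, ω x y = 1 := by
  obtain ⟨y, hy, hy0⟩ := exists_mem_ne_zero_of_ne_bot hU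
  obtain ⟨x, hx, hxy⟩ : ∃ x ∈ U, ω x y ≠ 0 := by
    by_contra! h
    exact hy0 (disjoint_def.1 hUo y hy h)
  exact ⟨(ω x y)⁻¹ • x, smul_mem _ _ hx, y, hy, by simp [hxy]⟩

section Pair

variable {x y : V} (hω : ω.IsAlt) (h : ω x y = 1)
include hω h

theorem apply_smul_add_smul (a b : 𝕜) :
    ω x (a • x + b • y) = b ∧ ω y (a • x + b • y) = -a := by
  simp [hω.self_eq_zero, h, ← hω.neg_eq x y]

theorem linearIndependent_pair : LinearIndependent 𝕜 ![x, y] :=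
  LinearIndependent.pair_iff.2 fun a b hab => by
    obtain ⟨hb, ha⟩ := apply_smul_add_smul hω h a b
    rw [hab, map_zero] at hb ha
    exact ⟨neg_eq_zero.1 ha.symm, hb.symm⟩

theorem finrank_span_pair : finrank 𝕜 (span 𝕜 {x, y}) = 2 := by
  have := finrank_span_eq_card (linearIndependent_pair hω h)
  rwa [Matrix.range_cons_cons_empty, Fintype.card_fin] at this

theorem disjoint_span_pair_orthogonal :
    Disjoint (span 𝕜 {x, y}) (ω.orthogonal (span 𝕜 {x, y})) := by
  rw [disjoint_def]
  rintro v hv hvo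
  obtain ⟨a, b, rfl⟩ := mem_span_pair.1 hv
  obtain ⟨hb, ha⟩ := apply_smul_add_smul hω h a b
  rw [hvo x (subset_span (by simp))] at hb
  rw [hvo y (subset_span (by simp))] at ha
  simp [← hb, neg_eq_zero.1 ha.symm]

end Pair

variable [FiniteDimensional 𝕜 V]

theorem exists_isSymplecticFamily_of_exists_pair (hω : ω.IsAlt) {F : V →ₗ[𝕜] V}
    (hF : ∀ u w, ω u (F w) = ω w (F u)) (S : Set 𝕜) {U₀ : Submodule 𝕜 V}
    (hpair : ∀ U ≤ U₀, U ≠ ⊥ → Disjoint U (ω.orthogonal U) → (∀ v ∈ U, F v ∈ U) →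
      ∃ x ∈ U, ∃ y ∈ U, ∃ μ ∈ S, ω x y = 1 ∧ F x = μ • y ∧ F y = -μ • x)
    (hU₀ : Disjoint U₀ (ω.orthogonal U₀)) (hFU₀ : ∀ v ∈ U₀, F v ∈ U₀) :
    ∃ (m : ℕ) (x y : Fin m → V) (μ : Fin m → 𝕜), finrank 𝕜 U₀ = 2 * m ∧
      IsSymplecticFamily ω x y ∧ (∀ i, x i ∈ U₀ ∧ y i ∈ U₀) ∧ (∀ i, μ i ∈ S) ∧
      ∀ i, F (x i) = μ i • y i ∧ F (y i) = -μ i • x i := by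
  induction hN : finrank 𝕜 U₀ using Nat.strong_induction_on generalizing U₀ with
  | _ N ih =>
  subst hN
  rcases eq_or_ne U₀ ⊥ with rfl | hne
  · exact ⟨0, Fin.elim0, Fin.elim0, Fin.elim0, by simp, ⟨nofun, nofun, nofun⟩, nofun, nofun,
      nofun⟩
  obtain ⟨x₀, hx₀, y₀, hy₀, μ₀, hμ₀, hxy, hFx, hFy⟩ := hpair U₀ le_rfl hne hU₀ hFU₀
  set P := span 𝕜 {x₀, y₀}
  have hxP : x₀ ∈ P := subset_span (by simp)
  have hyP : y₀ ∈ P := subset_span (by simp)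
  have hPU : P ≤ U₀ := span_le.2 (by simp [Set.insert_subset_iff, hx₀, hy₀])
  have hP := disjoint_span_pair_orthogonal hω hxy
  have hFP : ∀ v ∈ P, F v ∈ P := fun v hv => (span_le (p := P.comap F)).2
    (by simp [Set.insert_subset_iff, hFx, hFy, smul_mem _ _ hxP, smul_mem _ _ hyP]) hv
  set U := ω.orthogonal P ⊓ U₀
  have hdim : finrank 𝕜 U₀ = finrank 𝕜 U + 2 := by
    have := finrank_sup_add_finrank_inf_eq P U
    rwa [sup_orthogonal_inf_eq hω.isRefl hP hPU, (hP.mono_right inf_le_left).eq_bot, finrank_bot,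
      finrank_span_pair hω hxy, add_zero, add_comm] at this
  obtain ⟨m, x, y, μ, hm, hsymp, hmem, hμ, hFxy⟩ :=
    ih _ (by omega) (U₀ := U) (fun U' hU' => hpair U' (hU'.trans inf_le_right))
      (disjoint_orthogonal_inf hω.isRefl hP hPU hU₀)
      (fun v hv => ⟨map_mem_orthogonal hω.isRefl hF hFP v hv.1, hFU₀ v hv.2⟩) rfl
  refine ⟨m + 1, Fin.append x ![x₀], Fin.append y ![y₀], Fin.append μ ![μ₀], by omega,
    hsymp.append (isSymplecticFamily_singleton hω hxy) hω.isRefl hmem (U' := P)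
      (fun i => by simp [hxP, hyP]) inf_le_left,
    fun i => ?_, fun i => ?_, fun i => ?_⟩ <;> induction i using Fin.addCases
  · simpa using ⟨(hmem _).1.2, (hmem _).2.2⟩
  · simp [hx₀, hy₀]
  · simpa using hμ _
  · simpa using hμ₀
  · simpa using hFxy _
  · simp [hFx, hFy]

theorem exists_isSymplecticFamily (hω : ω.IsAlt) {U : Submodule 𝕜 V}
    (hU : Disjoint U (ω.orthogonal U)) :
    ∃ (m : ℕ) (x y : Fin m → V), finrank 𝕜 U = 2 * m ∧ IsSymplecticFamily ω x y ∧
      ∀ i, x i ∈ U ∧ y i ∈ U := by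
  obtain ⟨m, x, y, -, hm, hsymp, hmem, -⟩ :=
    exists_isSymplecticFamily_of_exists_pair hω (F := 0) (by simp) {0}
      (fun U' _ hU' hU'o _ => by
        obtain ⟨x, hx, y, hy, hxy⟩ := exists_apply_eq_one hU' hU'o
        exact ⟨x, hx, y, hy, 0, rfl, hxy, by simp, by simp⟩)
      hU (by simp)
  exact ⟨m, x, y, hm, hsymp, hmem⟩

end SymplecticComplement

section Real

variable {V : Type*} [AddCommGroup V] [Module ℝ V]

theorem apply_eq_zero_of_apply_self_eq_zero {B : BilinForm ℝ V} (hB : ∀ u v, B u v = B v u)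
    (hnn : ∀ v, 0 ≤ B v v) {v : V} (hv : B v v = 0) (u : V) : B u v = 0 := by
  have hdiscrim := discrim_le_zero (a := B v v) (b := 2 * B u v) (c := B u u) fun t => by
    have := hnn (u + t • v)
    simp only [map_add, map_smul, LinearMap.add_apply, LinearMap.smul_apply, smul_eq_mul,
      hB v u] at this
    linarith
  rw [hv, discrim, mul_zero, zero_mul, sub_zero] at hdiscrim
  nlinarith [sq_nonneg (B u v)]

variable {ω : BilinForm ℝ V} {F : V →ₗ[ℝ] V}

theorem pos_of_mem_orthogonal_ker (hω : ω.IsRefl) (hnondeg : ω.SeparatingLeft)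
    (hF : ∀ u w, ω u (F w) = ω w (F u)) (hnn : ∀ v, 0 ≤ ω v (F v))
    (hK : Disjoint (ker F) (ω.orthogonal (ker F))) {v : V} (hv : v ∈ ω.orthogonal (ker F))
    (hv0 : v ≠ 0) : 0 < ω v (F v) := by
  refine (hnn v).lt_of_ne fun h0 => hv0 (disjoint_def.1 hK v ?_ hv)
  refine hnondeg _ fun w => hω _ _ ?_
  exact apply_eq_zero_of_apply_self_eq_zero (B := ω.compl₂ F) hF hnn h0.symm w

variable [FiniteDimensional ℝ V]

theorem exists_eigenvector_of_posDef [Nontrivial V] (B : BilinForm ℝ V)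
    (hB : ∀ u v, B u v = B v u) (hpos : ∀ v, v ≠ 0 → 0 < B v v) (T : V →ₗ[ℝ] V)
    (hT : ∀ u v, B (T u) v = B u (T v)) : ∃ (c : ℝ) (v : V), v ≠ 0 ∧ T v = c • v := by
  let core : InnerProductSpace.Core ℝ V :=
    { inner u v := B u v
      conj_inner_symm u v := hB v u
      re_inner_nonneg v := by
        rcases eq_or_ne v 0 with rfl | hv
        · simp
        · exact (hpos v hv).le
      add_left u v w := by simp
      smul_left u v r := by simp
      definite v hv := by_contra fun h => (hpos v h).ne' hv }
  let _ : NormedAddCommGroup V := core.toNormedAddCommGroup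
  let _ : InnerProductSpace ℝ V := .ofCore core.toCore
  obtain ⟨v, hv, hv0⟩ :=
    (LinearMap.IsSymmetric.hasEigenvalue_iSup_of_finiteDimensional hT).exists_hasEigenvector
  exact ⟨_, v, hv0, Module.End.mem_eigenspace_iff.1 hv⟩

theorem exists_pair_of_pos (hω : ω.IsAlt) (hF : ∀ u w, ω u (F w) = ω w (F u))
    {U : Submodule ℝ V} (hU : U ≠ ⊥) (hFU : ∀ v ∈ U, F v ∈ U)
    (hpos : ∀ v ∈ U, v ≠ 0 → 0 < ω v (F v)) :
    ∃ x ∈ U, ∃ y ∈ U, ∃ μ > (0 : ℝ), ω x y = 1 ∧ F x = μ • y ∧ F y = -μ • x := by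
  have hskew (a b : V) : ω (F a) b = -ω a (F b) := by rw [← hω.neg_eq, hF]
  have : Nontrivial U := nontrivial_iff_ne_bot.2 hU
  obtain ⟨c, ⟨v, hvU⟩, hv0, hv⟩ :=
    exists_eigenvector_of_posDef (LinearMap.BilinForm.restrict (ω.compl₂ F) U)
      (fun u w => hF u w) (fun v hv => hpos v v.2 (by simpa using hv))
      (F.restrict hFU ∘ₗ F.restrict hFU) (fun u w => by simp [hskew])
  replace hv : F (F v) = c • v := congrArg Subtype.val hv
  replace hv0 : v ≠ 0 := by simpa using hv0
  have ha : 0 < ω v (F v) := hpos v hvU hv0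
  have hc : c < 0 := by
    have hFv0 : F v ≠ 0 := fun h => by simp [h] at ha
    have := hpos _ (hFU v hvU) hFv0
    rw [hv, map_smul, smul_eq_mul, hskew] at this
    nlinarith
  obtain ⟨μ, hμ, rfl⟩ : ∃ μ > 0, c = -μ ^ 2 :=
    ⟨√(-c), Real.sqrt_pos.2 (by linarith), by rw [Real.sq_sqrt (by linarith)]; ring⟩
  set r := √(μ / ω v (F v))
  have hr0 : r ≠ 0 := (Real.sqrt_pos.2 (div_pos hμ ha)).ne'
  have hr : r * r * ω v (F v) = μ := by
    rw [Real.mul_self_sqrt (by positivity)]; field_simp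
  refine ⟨r • v, smul_mem _ _ hvU, μ⁻¹ • F (r • v), smul_mem _ _ (hFU _ (smul_mem _ _ hvU)), μ,
    hμ, ?_, ?_, ?_⟩
  · simp only [map_smul, LinearMap.smul_apply, smul_eq_mul]
    rw [← hr]; field_simp
  · rw [smul_smul, mul_inv_cancel₀ hμ.ne', one_smul]
  · simp only [map_smul, hv, smul_smul]
    congr 1
    field_simp

theorem exists_isSymplecticFamily_of_pos (hω : ω.IsAlt) (hF : ∀ u w, ω u (F w) = ω w (F u))
    {W : Submodule ℝ V} (hW : Disjoint W (ω.orthogonal W)) (hFW : ∀ v ∈ W, F v ∈ W)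
    (hpos : ∀ v ∈ W, v ≠ 0 → 0 < ω v (F v)) :
    ∃ (m : ℕ) (x y : Fin m → V) (μ : Fin m → ℝ), finrank ℝ W = 2 * m ∧
      IsSymplecticFamily ω x y ∧ (∀ i, x i ∈ W ∧ y i ∈ W) ∧ (∀ i, 0 < μ i) ∧
      ∀ i, F (x i) = μ i • y i ∧ F (y i) = -μ i • x i :=
  exists_isSymplecticFamily_of_exists_pair hω hF (Set.Ioi 0)
    (fun _ hUW hU _ hFU => exists_pair_of_pos hω hF hU hFU fun v hv => hpos v (hUW hv)) hW hFW

theorem exists_isSymplecticFamily_normalForm (hω : ω.IsAlt) (hnondeg : ω.SeparatingLeft)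
    (hF : ∀ u w, ω u (F w) = ω w (F u)) (hnn : ∀ v, 0 ≤ ω v (F v))
    (hK : Disjoint (ker F) (ω.orthogonal (ker F))) :
    ∃ (k l : ℕ) (x y : Fin (k + l) → V) (μ : Fin (k + l) → ℝ), finrank ℝ V = 2 * (k + l) ∧
      IsSymplecticFamily ω x y ∧ (∀ i, F (x i) = μ i • y i ∧ F (y i) = -μ i • x i) ∧
      (∀ j : Fin (k + l), (j : ℕ) < k → 0 < μ j) ∧ ∀ j : Fin (k + l), k ≤ (j : ℕ) → μ j = 0 := by
  have hW : Disjoint (ω.orthogonal (ker F)) (ω.orthogonal (ω.orthogonal (ker F))) := by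
    have htop : Disjoint ⊤ (ω.orthogonal ⊤) :=
      disjoint_def.2 fun v _ hv => hnondeg v fun w => hω.isRefl _ _ (hv w trivial)
    simpa using disjoint_orthogonal_inf hω.isRefl hK le_top htop
  have hFW (v : V) : F v ∈ ω.orthogonal (ker F) := fun u hu => by
    rw [hF, LinearMap.mem_ker.1 hu, map_zero]
  obtain ⟨k, xW, yW, μW, hk, hWsymp, hWmem, hμW, hFW'⟩ :=
    exists_isSymplecticFamily_of_pos hω hF hW (fun v _ => hFW v)
      (fun v => pos_of_mem_orthogonal_ker hω.isRefl hnondeg hF hnn hK)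
  obtain ⟨l, xK, yK, hl, hKsymp, hKmem⟩ := exists_isSymplecticFamily hω hK
  refine ⟨k, l, Fin.append xW xK, Fin.append yW yK, Fin.append μW 0, ?_,
    hWsymp.append hKsymp hω.isRefl hWmem hKmem le_rfl, fun i => ?_,
    Fin.addCases (fun i _ => by simpa using hμW i) (fun i hi => by simp at hi),
    Fin.addCases (fun i hi => by simp at hi; omega) (fun i _ => by simp)⟩
  · have := finrank_add_eq_of_isCompl ((isCompl_orthogonal_iff_disjoint hω.isRefl).2 hK)
    omega
  · induction i using Fin.addCases
    · simpa using hFW' _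
    · simp [LinearMap.mem_ker.1 (hKmem _).1, LinearMap.mem_ker.1 (hKmem _).2]

end Real

/-- Hörmander, semidefinite case with symplectic kernel:
If f is positive-semidefinite on a 2n-dimensional symplectic space (V, ω)
with associated map F whose kernel is a symplectic subspace, then there is a
symplectic basis, 0 ≤ k ≤ n and positive μ_1,…,μ_k with
f(Σ s_j x_j + t_j y_j) = Σ_{j<k} μ_j (s_j² + t_j²). -/
theorem stmt10 {V : Type*} [AddCommGroup V] [Module ℝ V] [FiniteDimensional ℝ V]
    (n : ℕ) (hdim : Module.finrank ℝ V = 2 * n)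
    (ω : LinearMap.BilinForm ℝ V)
    (hω_anti : ∀ v w : V, ω v w = - ω w v)
    (hω_nondeg : ∀ v : V, (∀ w : V, ω v w = 0) → v = 0)
    (f : QuadraticForm ℝ V) (hf : ∀ v : V, 0 ≤ f v)
    (A : LinearMap.BilinForm ℝ V)
    (hA_symm : ∀ v w : V, A v w = A w v)
    (hAf : ∀ v : V, A v v = f v)
    (F : V →ₗ[ℝ] V)
    (hF : ∀ v w : V, A v w = ω v (F w))
    -- Ker(F) is a symplectic subspace: ω restricted to it is nondegenerate
    (hker_symp : ∀ v ∈ LinearMap.ker F,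
      (∀ w ∈ LinearMap.ker F, ω v w = 0) → v = 0) :
    ∃ (b : Module.Basis (Fin n ⊕ Fin n) ℝ V) (k : ℕ) (mu : Fin n → ℝ),
      k ≤ n ∧
      (∀ i j, ω (b (Sum.inl i)) (b (Sum.inr j)) = if i = j then 1 else 0) ∧
      (∀ i j, ω (b (Sum.inl i)) (b (Sum.inl j)) = 0) ∧
      (∀ i j, ω (b (Sum.inr i)) (b (Sum.inr j)) = 0) ∧
      (∀ j : Fin n, (j : ℕ) < k → 0 < mu j) ∧
      (∀ j : Fin n, k ≤ (j : ℕ) → mu j = 0) ∧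
      ∀ s t : Fin n → ℝ,
        f (∑ j, (s j • b (Sum.inl j) + t j • b (Sum.inr j)))
          = ∑ j, mu j * ((s j) ^ 2 + (t j) ^ 2) := by
  have hω : ω.IsAlt := fun v => by linarith [hω_anti v v]
  have hFsymm (u w : V) : ω u (F w) = ω w (F u) := by rw [← hF, hA_symm, hF]
  have hK : Disjoint (LinearMap.ker F) (ω.orthogonal (LinearMap.ker F)) :=
    disjoint_def.2 fun v hv hvo => hker_symp v hv fun w hw => hω.isRefl _ _ (hvo w hw)
  obtain ⟨k, l, x, y, μ, hkl, hsymp, hFxy, hμpos, hμzero⟩ :=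
    exists_isSymplecticFamily_normalForm hω hω_nondeg hFsymm
      (fun v => hF v v ▸ hAf v ▸ hf v) hK
  obtain rfl : n = k + l := by omega
  obtain ⟨b, hb⟩ := hsymp.exists_basis hω (by simp [hkl])
  refine ⟨b, k, μ, by omega, ?_, ?_, ?_, hμpos, hμzero, fun s t => ?_⟩
  · simpa [hb] using hsymp.left_right
  · simpa [hb] using hsymp.left_left
  · simpa [hb] using hsymp.right_right
  · simp only [hb, ← hAf, hF]
    exact hsymp.apply_sum_map_sum hω s t hFxy
end

section
/- Let F be a real linear endomorphism of V, extended to V^ℂ, and let λ ∈ ℂ with λ ≠ λ̄. Let V_(λ) be the generalized eigenspace of F for λ in V^ℂ, and W_(λ) = {Re v : v ∈ V_(λ)} ⊆ V. Then dim_ℝ W_(λ) = 2 dim_ℂ V_(λ); in particular dim_ℝ W_(λ) is even. -/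
open TensorProduct
open Module

section Aux
variable {V : Type*} [AddCommGroup V] [Module ℝ V]

noncomputable def piRe : (ℂ ⊗[ℝ] V) →ₗ[ℝ] V :=
  (TensorProduct.lid ℝ V).toLinearMap ∘ₗ LinearMap.rTensor V Complex.reLm

noncomputable def piIm : (ℂ ⊗[ℝ] V) →ₗ[ℝ] V :=
  (TensorProduct.lid ℝ V).toLinearMap ∘ₗ LinearMap.rTensor V Complex.imLm

@[simp] lemma piRe_tmul (z : ℂ) (v : V) : piRe (z ⊗ₜ[ℝ] v) = z.re • v := rfl
@[simp] lemma piIm_tmul (z : ℂ) (v : V) : piIm (z ⊗ₜ[ℝ] v) = z.im • v := rfl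

noncomputable def Jmap : V →ₗ[ℝ] ℂ ⊗[ℝ] V := TensorProduct.mk ℝ ℂ V Complex.I

lemma decomp : (TensorProduct.mk ℝ ℂ V 1) ∘ₗ piRe + Jmap ∘ₗ (piIm (V := V)) = LinearMap.id := by
  apply TensorProduct.ext'
  intro z v
  simp [Jmap, TensorProduct.mk_apply, TensorProduct.tmul_smul]
  rw [TensorProduct.smul_tmul', TensorProduct.smul_tmul', ← TensorProduct.add_tmul]
  norm_num [Complex.real_smul]

local notation "cj" => (LinearMap.rTensor V Complex.conjAe.toLinearMap :
  (ℂ ⊗[ℝ] V) →ₗ[ℝ] (ℂ ⊗[ℝ] V))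

@[simp] lemma cj_tmul (z : ℂ) (v : V) : cj (z ⊗ₜ[ℝ] v) = (starRingEnd ℂ z) ⊗ₜ[ℝ] v := rfl

lemma cj_cj (x : ℂ ⊗[ℝ] V) : cj (cj x) = x := by
  induction x with
  | zero => simp
  | tmul z v => simp
  | add a b ha hb => simp [ha, hb]

lemma cj_smul (μ : ℂ) (x : ℂ ⊗[ℝ] V) : cj (μ • x) = (starRingEnd ℂ μ) • cj x := by
  induction x with
  | zero => simp
  | tmul z v => rw [TensorProduct.smul_tmul']; simp [TensorProduct.smul_tmul']
  | add a b ha hb => simp [smul_add, ha, hb]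

lemma cj_baseChange (F : V →ₗ[ℝ] V) (x : ℂ ⊗[ℝ] V) :
    cj (F.baseChange ℂ x) = F.baseChange ℂ (cj x) := by
  induction x with
  | zero => simp
  | tmul z v => simp
  | add a b ha hb => simp [ha, hb]

lemma cj_gen (F : V →ₗ[ℝ] V) (lam : ℂ) (x : ℂ ⊗[ℝ] V)
    (hx : x ∈ Module.End.maxGenEigenspace (LinearMap.baseChange ℂ F) lam) :
    cj x ∈ Module.End.maxGenEigenspace (LinearMap.baseChange ℂ F) (starRingEnd ℂ lam) := by
  rw [Module.End.mem_maxGenEigenspace] at hx ⊢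
  obtain ⟨k, hk⟩ := hx
  refine ⟨k, ?_⟩
  have key : ∀ (n : ℕ) (y : ℂ ⊗[ℝ] V),
      ((F.baseChange ℂ - (starRingEnd ℂ lam) • 1) ^ n) (cj y)
        = cj (((F.baseChange ℂ - lam • 1) ^ n) y) := by
    intro n
    induction n with
    | zero => intro y; simp
    | succ n ih =>
      intro y
      rw [pow_succ', pow_succ']
      simp only [Module.End.mul_apply]
      have h1 : ∀ w : ℂ ⊗[ℝ] V, (F.baseChange ℂ - (starRingEnd ℂ lam) • 1) (cj w)
          = cj ((F.baseChange ℂ - lam • 1) w) := by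
        intro w
        simp only [LinearMap.sub_apply, LinearMap.smul_apply, Module.End.one_apply, map_sub,
          cj_smul, cj_baseChange]
      rw [ih, h1]
  rw [key, hk, map_zero]

lemma piIm_cj (x : ℂ ⊗[ℝ] V) : piIm (cj x) = - piIm x := by
  induction x with
  | zero => simp
  | tmul z v => simp [neg_smul]
  | add a b ha hb => simp [ha, hb]; abel

end Aux

/-- For a real endomorphism F of V extended to V^ℂ and λ ≠ λ̄,
the space W_(λ) of real parts of the generalized λ-eigenspace V_(λ) satisfies
dim_ℝ W_(λ) = 2 dim_ℂ V_(λ) (in particular it is even-dimensional). -/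
theorem stmt14 {V : Type*} [AddCommGroup V] [Module ℝ V] [FiniteDimensional ℝ V]
    (F : V →ₗ[ℝ] V) (lam : ℂ) (hlam : lam ≠ (starRingEnd ℂ) lam) :
    -- the canonical embedding V → V^ℂ = ℂ ⊗[ℝ] V
    let ι : V →ₗ[ℝ] ℂ ⊗[ℝ] V := TensorProduct.mk ℝ ℂ V 1
    -- complex conjugation on V^ℂ
    let conj : (ℂ ⊗[ℝ] V) →ₗ[ℝ] (ℂ ⊗[ℝ] V) :=
      LinearMap.rTensor V Complex.conjAe.toLinearMap
    -- v ↦ Re v = (v + v̄)/2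
    let reMap : (ℂ ⊗[ℝ] V) →ₗ[ℝ] (ℂ ⊗[ℝ] V) := (1/2 : ℝ) • (LinearMap.id + conj)
    -- the generalized eigenspace V_(λ) of the complexification of F
    let Vlam : Submodule ℂ (ℂ ⊗[ℝ] V) :=
      Module.End.maxGenEigenspace (LinearMap.baseChange ℂ F) lam
    -- W_(λ) = {Re v : v ∈ V_(λ)}, viewed as a subspace of V
    let W : Submodule ℝ V :=
      Submodule.comap ι (Submodule.map reMap (Vlam.restrictScalars ℝ))
    Module.finrank ℝ W = 2 * Module.finrank ℂ Vlam := by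
  intro ι conj reMap Vlam W
  classical
  haveI : FiniteDimensional ℝ (ℂ ⊗[ℝ] V) := inferInstance
  -- injectivity of ι
  have hι : Function.Injective ι := by
    have : Function.LeftInverse piRe ι := by
      intro v; simp [ι, TensorProduct.mk_apply]
    exact this.injective
  -- reMap formula
  have hreMap : ∀ x : ℂ ⊗[ℝ] V, reMap x = (1/2 : ℝ) • (x + conj x) := by
    intro x; simp [reMap]
  -- injectivity of reMap on Vlam
  have hreMap_inj : ∀ x, x ∈ Vlam.restrictScalars ℝ → reMap x = 0 → x = 0 := by
    intro x hx h0
    rw [hreMap, smul_eq_zero] at h0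
    rcases h0 with h0 | h0
    · norm_num at h0
    · have hcx : conj x = -x := by linear_combination (norm := abel) h0
      have hmem : x ∈ Module.End.maxGenEigenspace (LinearMap.baseChange ℂ F) (starRingEnd ℂ lam) := by
        have := cj_gen F lam x hx
        rw [hcx] at this
        simpa using (neg_mem_iff.mp this)
      have hd := Module.End.disjoint_genEigenspace (LinearMap.baseChange ℂ F) hlam ⊤ ⊤
      exact Submodule.disjoint_def.mp hd x hx hmem
  -- image of reMap on Vlam lies in range ι
  have hsub : Submodule.map reMap (Vlam.restrictScalars ℝ) ≤ LinearMap.range ι := by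
    rintro _ ⟨x, hx, rfl⟩
    have hconjfix : conj (reMap x) = reMap x := by
      rw [hreMap, map_smul, map_add, cj_cj, add_comm]
    have him : piIm (reMap x) = 0 := by
      have h1 : piIm (reMap x) = - piIm (reMap x) := by
        conv_lhs => rw [← hconjfix]
        exact piIm_cj (reMap x)
      have h2 : (2 : ℝ) • piIm (reMap x) = 0 := by
        rw [two_smul]; linear_combination (norm := abel) h1
      simpa using (smul_eq_zero.mp h2).resolve_left (by norm_num)
    have hd := LinearMap.congr_fun (decomp (V := V)) (reMap x)
    refine ⟨piRe (reMap x), ?_⟩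
    simp only [LinearMap.add_apply, LinearMap.comp_apply, LinearMap.id_apply, him, map_zero,
      add_zero] at hd
    exact hd
  -- now the dimension count
  have h1 : Submodule.map ι W = Submodule.map reMap (Vlam.restrictScalars ℝ) := by
    rw [Submodule.map_comap_eq, inf_eq_right.mpr hsub]
  have e1 : finrank ℝ W = finrank ℝ (Submodule.map ι W) :=
    (Submodule.equivMapOfInjective ι hι W).finrank_eq
  have h2 : Submodule.map reMap (Vlam.restrictScalars ℝ)
      = LinearMap.range (reMap ∘ₗ (Vlam.restrictScalars ℝ).subtype) := by
    rw [LinearMap.range_comp, Submodule.range_subtype]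
  have hinj2 : Function.Injective (reMap ∘ₗ (Vlam.restrictScalars ℝ).subtype) := by
    rw [← LinearMap.ker_eq_bot]
    rw [LinearMap.ker_eq_bot']
    intro m hm
    exact Subtype.ext (hreMap_inj m.1 m.2 hm)
  have e2 : finrank ℝ (LinearMap.range (reMap ∘ₗ (Vlam.restrictScalars ℝ).subtype))
      = finrank ℝ (Vlam.restrictScalars ℝ) :=
    LinearMap.finrank_range_of_inj hinj2
  have e3 : finrank ℝ (Vlam.restrictScalars ℝ) = finrank ℝ Vlam :=
    ((Submodule.restrictScalarsEquiv ℝ ℂ (ℂ ⊗[ℝ] V) Vlam).restrictScalars ℝ).finrank_eq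
  have e4 : finrank ℝ Vlam = 2 * finrank ℂ Vlam := by
    rw [← Module.finrank_mul_finrank ℝ ℂ Vlam, Complex.finrank_real_complex]
  rw [e1, h1, h2, e2, e3, e4]
end

section
/- A symmetric positive-definite matrix M ∈ M_{2n}(ℝ) is diagonalizable in the sense of Williamson's theorem by an orthogonal symplectic matrix (i.e., there exists S with SᵀJS = J, SᵀS = I, and SᵀMS = diag(D, D) with D diagonal positive) if and only if JM = MJ. -/
/-!
Identify `ℝ²ⁿ` with `ℂⁿ` through `(x, y) ↦ x + i y`; then `J` is multiplication by `-i`, so the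
real matrices commuting with `J` are exactly the realifications of complex `n × n` matrices `H`.
A symmetric realification comes from a Hermitian `H`, and the realification of a unitary matrix is
orthogonal and symplectic, so the unitary diagonalization of `H` yields `S`, with `D` the
eigenvalues of `H`. Conversely `diag(D, D)` is the realification of a complex matrix and so
commutes with `J`, and conjugation by an orthogonal `S` preserving `J` carries this back to `M`.
-/

open Matrix

namespace Matrix

variable {l m p : Type*}

/-- The matrix of `z ↦ C z` in the real coordinates `(Re z, Im z)`. -/
def realify (C : Matrix l m ℂ) : Matrix (l ⊕ l) (m ⊕ m) ℝ :=
  fromBlocks (C.map (·.re)) (-C.map (·.im)) (C.map (·.im)) (C.map (·.re))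

theorem realify_injective : Function.Injective (realify : Matrix l m ℂ → _) := by
  intro A B h
  ext i j : 1
  apply Complex.ext
  · simpa [realify] using congrFun (congrFun h (.inl i)) (.inl j)
  · simpa [realify] using congrFun (congrFun h (.inr i)) (.inl j)

theorem realify_mul [Fintype m] (A : Matrix l m ℂ) (B : Matrix m p ℂ) :
    realify (A * B) = realify A * realify B := by
  ext (i | i) (j | j) <;>
    simp [realify, mul_apply, Fintype.sum_sum_type, Complex.re_sum, Complex.im_sum,
      Finset.sum_add_distrib, Finset.sum_sub_distrib] <;> ring

theorem realify_conjTranspose (A : Matrix l m ℂ) : realify Aᴴ = (realify A)ᵀ := by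
  ext (i | i) (j | j) <;> simp [realify]

theorem realify_one [DecidableEq m] : realify (1 : Matrix m m ℂ) = 1 := by
  ext (i | i) (j | j) <;> simp [realify, one_apply, apply_ite]

theorem realify_diagonal_ofReal [DecidableEq m] (d : m → ℝ) :
    realify (diagonal fun i ↦ (d i : ℂ)) = fromBlocks (diagonal d) 0 0 (diagonal d) := by
  ext (i | i) (j | j) <;> by_cases i = j <;> simp_all [realify]

theorem realify_neg_I_smul_one [DecidableEq m] :
    realify ((-Complex.I) • (1 : Matrix m m ℂ)) = fromBlocks 0 1 (-1) 0 := by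
  ext (i | i) (j | j) <;> simp [realify, one_apply, apply_ite]

theorem IsHermitian.of_isSymm_realify {C : Matrix m m ℂ} (h : (realify C).IsSymm) :
    C.IsHermitian :=
  realify_injective <| by rw [realify_conjTranspose]; exact h

theorem _root_.Commute.realify [Fintype m] {A B : Matrix m m ℂ} (h : Commute A B) :
    Commute (realify A) (realify B) := by
  simp only [Commute, SemiconjBy, ← realify_mul, h.eq]

theorem exists_realify_eq_of_commute [Fintype m] [DecidableEq m]
    {M : Matrix (m ⊕ m) (m ⊕ m) ℝ} (h : Commute (fromBlocks 0 1 (-1) 0) M) :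
    ∃ C : Matrix m m ℂ, realify C = M := by
  refine ⟨of fun i j ↦ ⟨M (.inl i) (.inl j), M (.inr i) (.inl j)⟩, ?_⟩
  have h' := fun a b ↦ congrFun (congrFun h.eq a) b
  ext (i | i) (j | j)
  · simp [realify]
  · simpa [realify, mul_apply, Fintype.sum_sum_type, one_apply, neg_eq_iff_eq_neg, eq_comm]
      using h' (.inl i) (.inl j)
  · simp [realify]
  · simpa [realify, mul_apply, Fintype.sum_sum_type, one_apply, eq_comm]
      using h' (.inl i) (.inr j)

theorem transpose_realify_mul_realify_mul_realify [Fintype m] (U X : Matrix m m ℂ) :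
    (realify U)ᵀ * realify X * realify U = realify (Uᴴ * X * U) := by
  rw [realify_mul, realify_mul, realify_conjTranspose]

theorem transpose_realify_mul_realify [Fintype m] [DecidableEq m] {U : Matrix m m ℂ}
    (hU : Uᴴ * U = 1) : (realify U)ᵀ * realify U = 1 := by
  rw [← realify_conjTranspose, ← realify_mul, hU, realify_one]

theorem transpose_realify_mul_fromBlocks_mul_realify [Fintype m] [DecidableEq m]
    {U : Matrix m m ℂ} (hU : Uᴴ * U = 1) :
    (realify U)ᵀ * fromBlocks 0 1 (-1) 0 * realify U = fromBlocks 0 1 (-1) 0 := by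
  rw [← realify_neg_I_smul_one, transpose_realify_mul_realify_mul_realify, Matrix.mul_smul,
    mul_one, Matrix.smul_mul, hU]

theorem commute_of_commute_transpose_mul_mul [Fintype m] [DecidableEq m] {R : Type*}
    [CommRing R] {S X Y : Matrix m m R} (hS : Sᵀ * S = 1)
    (h : Commute (Sᵀ * X * S) (Sᵀ * Y * S)) : Commute X Y := by
  have hS' : S * Sᵀ = 1 := mul_eq_one_comm.mp hS
  have conj : ∀ Z, S * (Sᵀ * Z * S) * Sᵀ = Z := fun Z ↦ by
    simp only [← mul_assoc, hS', one_mul]; rw [mul_assoc, hS', mul_one]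
  have conj_mul : ∀ A B, S * (A * B) * Sᵀ = (S * A * Sᵀ) * (S * B * Sᵀ) := fun A B ↦ by
    simp only [mul_assoc]; rw [← mul_assoc Sᵀ S, hS, one_mul]
  rw [Commute, SemiconjBy, ← conj X, ← conj Y, ← conj_mul, ← conj_mul, h.eq]

theorem PosDef.pos_of_transpose_mul_mul_eq_fromBlocks_diagonal [Fintype m] [DecidableEq m]
    {M S : Matrix (m ⊕ m) (m ⊕ m) ℝ} {D : m → ℝ} (hM : M.PosDef) (hS : Sᵀ * S = 1)
    (h : Sᵀ * M * S = fromBlocks (diagonal D) 0 0 (diagonal D)) (j : m) : 0 < D j := by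
  have hSM : (Sᵀ * M * S).PosDef := by
    rw [← conjTranspose_eq_transpose_of_trivial]
    exact hM.conjTranspose_mul_mul_same <| mulVec_injective_of_isUnit <|
      IsUnit.of_mul_eq_one_right _ hS
  simpa [h] using hSM.diag_pos (i := .inl j)

end Matrix

theorem stmt18_general (n : ℕ)
    (M : Matrix (Fin n ⊕ Fin n) (Fin n ⊕ Fin n) ℝ)
    (hM_pos : M.PosDef)
    (J : Matrix (Fin n ⊕ Fin n) (Fin n ⊕ Fin n) ℝ)
    (hJ : J = Matrix.fromBlocks 0 1 (-1) 0) :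
    (∃ (S : Matrix (Fin n ⊕ Fin n) (Fin n ⊕ Fin n) ℝ) (D : Fin n → ℝ),
      Sᵀ * J * S = J ∧ Sᵀ * S = 1 ∧ (∀ j, 0 < D j) ∧
      Sᵀ * M * S = Matrix.fromBlocks (Matrix.diagonal D) 0 0 (Matrix.diagonal D))
    ↔ J * M = M * J := by
  subst hJ
  constructor
  · rintro ⟨S, D, hJS, hS, -, hMS⟩
    refine commute_of_commute_transpose_mul_mul hS ?_
    rw [hJS, hMS, ← realify_neg_I_smul_one, ← realify_diagonal_ofReal]
    exact ((Commute.one_left _).smul_left _).realify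
  · intro hJM
    obtain ⟨H, rfl⟩ := exists_realify_eq_of_commute hJM
    have hH : H.IsHermitian := .of_isSymm_realify (isHermitian_iff_isSymm.mp hM_pos.isHermitian)
    set U : Matrix (Fin n) (Fin n) ℂ := (hH.eigenvectorUnitary : Matrix (Fin n) (Fin n) ℂ)
    have hU : Uᴴ * U = 1 := Unitary.coe_star_mul_self hH.eigenvectorUnitary
    have hUHU : Uᴴ * H * U = diagonal fun i ↦ (hH.eigenvalues i : ℂ) := by
      simpa [Unitary.conjStarAlgAut_apply, Function.comp_def, star_eq_conjTranspose] using
        hH.conjStarAlgAut_star_eigenvectorUnitary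
    have hMS : (realify U)ᵀ * realify H * realify U =
        fromBlocks (diagonal hH.eigenvalues) 0 0 (diagonal hH.eigenvalues) := by
      rw [transpose_realify_mul_realify_mul_realify, hUHU, realify_diagonal_ofReal]
    exact ⟨realify U, hH.eigenvalues, transpose_realify_mul_fromBlocks_mul_realify hU,
      transpose_realify_mul_realify hU,
      hM_pos.pos_of_transpose_mul_mul_eq_fromBlocks_diagonal (transpose_realify_mul_realify hU) hMS,
      hMS⟩

/-- A symmetric positive-definite M ∈ M_{2n}(ℝ) is Williamson
diagonalizable by an orthogonal symplectic matrix iff JM = MJ. -/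
theorem stmt18 (n : ℕ)
    (M : Matrix (Fin n ⊕ Fin n) (Fin n ⊕ Fin n) ℝ)
    (hM_symm : M.IsSymm) (hM_pos : M.PosDef)
    (J : Matrix (Fin n ⊕ Fin n) (Fin n ⊕ Fin n) ℝ)
    (hJ : J = Matrix.fromBlocks 0 1 (-1) 0) :
    (∃ (S : Matrix (Fin n ⊕ Fin n) (Fin n ⊕ Fin n) ℝ) (D : Fin n → ℝ),
      Sᵀ * J * S = J ∧ Sᵀ * S = 1 ∧ (∀ j, 0 < D j) ∧
      Sᵀ * M * S = Matrix.fromBlocks (Matrix.diagonal D) 0 0 (Matrix.diagonal D))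
    ↔ J * M = M * J :=
  stmt18_general n M hM_pos J hJ
end

section
/- Let A, B ∈ M_{2n}(ℝ) be symmetric positive-definite matrices with AB = BA and (JA)(JB) = (JB)(JA). Then for every s ∈ ℝ, the matrices A^s and B^s satisfy (J A^s)(J B^s) = (J B^s)(J A^s). -/
/-!
Write `A = exp a` and `B = exp b` with `a = log A`, `b = log B`; these commute because `A` and `B`
do. As `J` is invertible, the hypothesis says `A J B = B J A`, i.e. that `exp (a - b) = A B⁻¹`
commutes with `J`. Then `a - b = log (exp (a - b))` commutes with `J`, hence so does
`exp (s • (a - b)) = A^s B^(-s)`, and this is the claim `A^s J B^s = B^s J A^s`.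
-/

open Matrix

/-- The real power A^s of a real symmetric matrix, defined via its spectral
decomposition: A^s = U diag(λ_i ^ s) U*. -/
noncomputable def matRpow {m : Type*} [Fintype m] [DecidableEq m]
    (A : Matrix m m ℝ) (hA : A.IsHermitian) (s : ℝ) : Matrix m m ℝ :=
  (hA.eigenvectorUnitary : Matrix m m ℝ) *
    Matrix.diagonal (fun i => (hA.eigenvalues i) ^ s) *
    star (hA.eigenvectorUnitary : Matrix m m ℝ)

open NormedSpace CFC
open scoped Matrix.Norms.L2Operator MatrixOrder

theorem IsUnit.mul_mul_mul_mul_comm_iff {M : Type*} [Monoid M] {J x y : M} (hJ : IsUnit J) :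
    J * x * (J * y) = J * y * (J * x) ↔ x * J * y = y * J * x := by
  simp only [mul_assoc, hJ.mul_right_inj]

theorem IsUnit.mul_mul_mul_eq_iff_commute {M : Type*} [Monoid M] {x q J : M}
    (hq : IsUnit q) (hxq : Commute x q) : x * q * J * q = q * J * (x * q) ↔ Commute x J := by
  rw [← mul_assoc (q * J), hxq.eq, mul_assoc q x J, mul_assoc q J x, hq.mul_left_inj,
    hq.mul_right_inj]
  rfl

namespace Matrix

theorem isUnit_fromBlocks_zero_one_neg_one_zero (l R : Type*) [Fintype l] [DecidableEq l]
    [CommRing R] : IsUnit (fromBlocks 0 1 (-1) 0 : Matrix (l ⊕ l) (l ⊕ l) R) := by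
  have hJ : (fromBlocks 0 1 (-1) 0 : Matrix (l ⊕ l) (l ⊕ l) R) = -J l R := by
    simp [J, fromBlocks_neg]
  rw [hJ]
  exact ((isUnit_iff_isUnit_det _).2 (isUnit_det_J l R)).neg

variable {m : Type*} [Fintype m] [DecidableEq m]

theorem IsHermitian.matRpow_eq_cfc {A : Matrix m m ℝ} (hA : A.IsHermitian) (s : ℝ) :
    matRpow A hA s = cfc (fun x : ℝ => x ^ s) A := by
  rw [hA.cfc_eq, IsHermitian.cfc, Unitary.conjStarAlgAut_apply, matRpow]
  rfl

theorem PosDef.matRpow_eq_exp_smul_log {A : Matrix m m ℝ} (hA : A.PosDef) (s : ℝ) :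
    matRpow A hA.isHermitian s = exp (s • log A) := by
  have hspec : ∀ x ∈ spectrum ℝ A, 0 < x := fun x hx => hA.isStrictlyPositive.spectrum_pos hx
  have hlog : ContinuousOn Real.log (spectrum ℝ A) :=
    Real.continuousOn_log.mono fun x hx => (hspec x hx).ne'
  rw [hA.isHermitian.matRpow_eq_cfc, log, ← cfc_const_mul s Real.log A hlog,
    ← real_exp_eq_normedSpace_exp, ← cfc_comp Real.exp (fun x => s * Real.log x) A]
  exact cfc_congr fun x hx => by
    simp [Real.rpow_def_of_pos (hspec x hx), mul_comm]

theorem exp_smul_mul_mul_exp_smul_comm {a b J : Matrix m m ℝ} (ha : IsSelfAdjoint a)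
    (hb : IsSelfAdjoint b) (hab : Commute a b) (h : exp a * J * exp b = exp b * J * exp a)
    (s : ℝ) : exp (s • a) * J * exp (s • b) = exp (s • b) * J * exp (s • a) := by
  set d := a - b
  have hdb : Commute d b := hab.sub_left (Commute.refl b)
  have hsplit : ∀ t : ℝ, exp (t • a) = exp (t • d) * exp (t • b) := fun t => by
    rw [← exp_add_of_commute _ _ ((hdb.smul_left t).smul_right t), ← smul_add, sub_add_cancel]
  have hexp_d : Commute (exp d) J := by
    rw [show exp a = exp d * exp b by simpa using hsplit 1] at h
    exact ((isUnit_exp b).mul_mul_mul_eq_iff_commute hdb.exp).1 h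
  have hdJ : Commute d J := by
    have := hexp_d.cfc_real Real.log
    rwa [show cfc Real.log (exp d) = d from log_exp d (ha.sub hb)] at this
  rw [hsplit s]
  exact ((isUnit_exp _).mul_mul_mul_eq_iff_commute ((hdb.smul_left s).smul_right s).exp).2
    (hdJ.smul_left s).exp_left

theorem PosDef.matRpow_mul_mul_matRpow_comm {A B J : Matrix m m ℝ} (hA : A.PosDef)
    (hB : B.PosDef) (hAB : Commute A B) (h : A * J * B = B * J * A) (s : ℝ) :
    matRpow A hA.isHermitian s * J * matRpow B hB.isHermitian s
      = matRpow B hB.isHermitian s * J * matRpow A hA.isHermitian s := by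
  rw [← exp_log A hA.isStrictlyPositive, ← exp_log B hB.isStrictlyPositive] at h
  rw [hA.matRpow_eq_exp_smul_log, hB.matRpow_eq_exp_smul_log]
  exact exp_smul_mul_mul_exp_smul_comm .log .log
    ((hAB.cfc_real Real.log).symm.cfc_real Real.log).symm h s

end Matrix

theorem stmt19_general (n : ℕ)
    (A B : Matrix (Fin n ⊕ Fin n) (Fin n ⊕ Fin n) ℝ)
    (hA_pos : A.PosDef) (hB_pos : B.PosDef)
    (J : Matrix (Fin n ⊕ Fin n) (Fin n ⊕ Fin n) ℝ)
    (hJ : J = Matrix.fromBlocks 0 1 (-1) 0)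
    (hcomm : A * B = B * A)
    (hJcomm : (J * A) * (J * B) = (J * B) * (J * A)) :
    ∀ s : ℝ,
      (J * matRpow A hA_pos.isHermitian s) * (J * matRpow B hB_pos.isHermitian s)
        = (J * matRpow B hB_pos.isHermitian s) * (J * matRpow A hA_pos.isHermitian s) := by
  have hJ_unit : IsUnit J := hJ ▸ isUnit_fromBlocks_zero_one_neg_one_zero (Fin n) ℝ
  rw [hJ_unit.mul_mul_mul_mul_comm_iff] at hJcomm
  intro s
  rw [hJ_unit.mul_mul_mul_mul_comm_iff]
  exact hA_pos.matRpow_mul_mul_matRpow_comm hB_pos hcomm hJcomm s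

/-- If A, B are symmetric positive-definite with AB = BA and
(JA)(JB) = (JB)(JA), then for every s ∈ ℝ, (JA^s)(JB^s) = (JB^s)(JA^s). -/
theorem stmt19 (n : ℕ)
    (A B : Matrix (Fin n ⊕ Fin n) (Fin n ⊕ Fin n) ℝ)
    (hA_symm : A.IsSymm) (hB_symm : B.IsSymm)
    (hA_pos : A.PosDef) (hB_pos : B.PosDef)
    (J : Matrix (Fin n ⊕ Fin n) (Fin n ⊕ Fin n) ℝ)
    (hJ : J = Matrix.fromBlocks 0 1 (-1) 0)
    (hcomm : A * B = B * A)
    (hJcomm : (J * A) * (J * B) = (J * B) * (J * A)) :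
    ∀ s : ℝ,
      (J * matRpow A hA_pos.isHermitian s) * (J * matRpow B hB_pos.isHermitian s)
        = (J * matRpow B hB_pos.isHermitian s) * (J * matRpow A hA_pos.isHermitian s) :=
  stmt19_general n A B hA_pos hB_pos J hJ hcomm hJcomm
end
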